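/- arXiv:2103.14847 — 14 statements merged into one kernel-verified Lean document; each statement's English description precedes it below -/
import Mathlib

section
/- Let w1 and w2 be weight functions and let k, q > 0 and t ≥ 0 be integers such that w1(x) = q·(w2(x+t) − w2(t)) for every x ∈ {0, 1, …, k}. Let P1 be a poset partial profile over a candidate set C1, let D be a set of t candidates disjoint from C1, and let P2 be the poset partial profile over C1 ∪ D obtained from P1 by adding all candidates of D to Top(v) for every voter v (leaving Middle(v), Bottom(v) and ≻_v unchanged). Then for every W ⊆ C1 with |W| = k: W is a possible committee of size k for P1 under w1-Thiele if and only if W ∪ D is a possible committee of size k+t for P2 under w2-Thiele. -/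
open Finset

variable {V C : Type*}

/-- The `w`-Thiele score of a set `S` under approval profile `A`. -/
def thieleScore [Fintype V] [DecidableEq C] (w : ℕ → ℚ) (A : V → Finset C) (S : Finset C) : ℚ :=
  ∑ v, w ((S ∩ A v).card)

/-- `W` is a winning committee of size `k` under `w`-Thiele among subsets of the
candidate set `Cs`. -/
def IsWinningIn [Fintype V] [DecidableEq C] (w : ℕ → ℚ) (Cs : Finset C) (k : ℕ)
    (A : V → Finset C) (W : Finset C) : Prop :=
  W ⊆ Cs ∧ W.card = k ∧
    ∀ W' ⊆ Cs, W'.card = k → thieleScore w A W' ≤ thieleScore w A W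

/-- `A` is a completion of the poset partial profile given by `Top`, `Mid` and
the partial orders `pref`. -/
def IsCompletion [DecidableEq C] (Top Mid : V → Finset C) (pref : V → C → C → Prop)
    (A : V → Finset C) : Prop :=
  ∀ v, Top v ⊆ A v ∧ A v ⊆ Top v ∪ Mid v ∧
    ∀ c c', pref v c c' → c' ∈ A v → c ∈ A v

lemma inter_union_card_aux [DecidableEq C] (Wp A D : Finset C)
    (h1 : Disjoint Wp D) :
    ((Wp ∪ D) ∩ (A ∪ D)).card = (Wp ∩ A).card + D.card := by
  have h : (Wp ∪ D) ∩ (A ∪ D) = (Wp ∩ A) ∪ D := by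
    ext x
    simp only [Finset.mem_inter, Finset.mem_union]
    constructor
    · rintro ⟨hx1 | hx1, hx2 | hx2⟩ <;> tauto
    · rintro (⟨ha, hb⟩ | h) <;> tauto
  rw [h, Finset.card_union_of_disjoint]
  exact Finset.disjoint_of_subset_left Finset.inter_subset_left h1

lemma key_score_eq [Fintype V] [DecidableEq C] (w1 w2 : ℕ → ℚ) (q t k : ℕ)
    (hrel : ∀ x ≤ k, w1 x = (q : ℚ) * (w2 (x + t) - w2 t))
    (A : V → Finset C) (Wp D : Finset C) (hD : D.card = t)
    (hWD : Disjoint Wp D) (hWk : Wp.card ≤ k) :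
    (q : ℚ) * thieleScore w2 (fun v => A v ∪ D) (Wp ∪ D) =
      thieleScore w1 A Wp + (q : ℚ) * (Fintype.card V) * w2 t := by
  unfold thieleScore
  rw [Finset.mul_sum]
  have : ∀ v : V, (q:ℚ) * w2 (((Wp ∪ D) ∩ (A v ∪ D)).card)
      = w1 ((Wp ∩ A v).card) + (q:ℚ) * w2 t := by
    intro v
    rw [inter_union_card_aux Wp (A v) D hWD, hD]
    have hx : (Wp ∩ A v).card ≤ k :=
      le_trans (Finset.card_le_card Finset.inter_subset_left) hWk
    rw [hrel _ hx]; ring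
  rw [Finset.sum_congr rfl (fun v _ => this v), Finset.sum_add_distrib]
  simp [Finset.sum_const, mul_comm, mul_assoc, mul_left_comm]

theorem stmt0 [Fintype V] [DecidableEq C]
    (w1 w2 : ℕ → ℚ)
    (hw1mono : Monotone w1) (hw10 : w1 0 = 0) (hw1nonneg : ∀ x, 0 ≤ w1 x)
    (hw2mono : Monotone w2) (hw20 : w2 0 = 0) (hw2nonneg : ∀ x, 0 ≤ w2 x)
    (k q t : ℕ) (hk : 0 < k) (hq : 0 < q)
    (hrel : ∀ x ≤ k, w1 x = (q : ℚ) * (w2 (x + t) - w2 t))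
    (C1 D : Finset C) (hdisj : Disjoint C1 D) (hD : D.card = t)
    (Top Mid Bot : V → Finset C) (pref : V → C → C → Prop)
    (hpart : ∀ v, Top v ∪ Mid v ∪ Bot v = C1)
    (hTM : ∀ v, Disjoint (Top v) (Mid v)) (hTB : ∀ v, Disjoint (Top v) (Bot v))
    (hMB : ∀ v, Disjoint (Mid v) (Bot v))
    (hdom : ∀ v c c', pref v c c' → c ∈ Mid v ∧ c' ∈ Mid v)
    (htrans : ∀ v, Transitive (pref v))
    (hanti : ∀ v c c', pref v c c' → pref v c' c → c = c')
    (W : Finset C) (hWC : W ⊆ C1) (hWcard : W.card = k) :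
    (∃ A : V → Finset C, IsCompletion Top Mid pref A ∧ IsWinningIn w1 C1 k A W) ↔
    (∃ A : V → Finset C, IsCompletion (fun v => Top v ∪ D) Mid pref A ∧
      IsWinningIn w2 (C1 ∪ D) (k + t) A (W ∪ D)) := by
  have hqQ : (0:ℚ) < (q:ℚ) := by exact_mod_cast hq
  have hTC1 : ∀ v, Top v ⊆ C1 := fun v => by
    rw [← hpart v]; exact (Finset.subset_union_left).trans Finset.subset_union_left
  have hMC1 : ∀ v, Mid v ⊆ C1 := fun v => by
    rw [← hpart v]; exact (Finset.subset_union_right).trans Finset.subset_union_left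
  have hWD : Disjoint W D := Finset.disjoint_of_subset_left hWC hdisj
  have hWDcard : (W ∪ D).card = k + t := by
    rw [Finset.card_union_of_disjoint hWD, hWcard, hD]
  constructor
  · rintro ⟨A, hcomp, hWsub, hWk, hWmax⟩
    have hAC1 : ∀ v, A v ⊆ C1 := fun v =>
      ((hcomp v).2.1).trans (by rw [← hpart v]; exact Finset.subset_union_left)
    refine ⟨fun v => A v ∪ D, fun v => ⟨?_, ?_, ?_⟩, ?_, ?_, ?_⟩
    · exact Finset.union_subset_union (hcomp v).1 le_rfl
    · intro x hx
      rcases Finset.mem_union.1 hx with hx | hx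
      · rcases Finset.mem_union.1 ((hcomp v).2.1 hx) with h | h
        · exact Finset.mem_union_left _ (Finset.mem_union_left _ h)
        · exact Finset.mem_union_right _ h
      · exact Finset.mem_union_left _ (Finset.mem_union_right _ hx)
    · intro c c' hp hc'
      have hc'M : c' ∈ Mid v := (hdom v c c' hp).2
      have hc'A : c' ∈ A v := by
        rcases Finset.mem_union.1 hc' with h | h
        · exact h
        · exact absurd h (Finset.disjoint_left.1 hdisj (hMC1 v hc'M))
      exact Finset.mem_union_left _ ((hcomp v).2.2 c c' hp hc'A)
    · exact Finset.union_subset_union hWC le_rfl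
    · exact hWDcard
    · intro W' hW' hW'card
      set W1 := W' ∩ C1 with hW1def
      have hdle : (W' ∩ D).card ≤ t := by
        rw [← hD]; exact Finset.card_le_card Finset.inter_subset_right
      have hsplit : W' = W1 ∪ (W' ∩ D) := by
        rw [hW1def, ← Finset.inter_union_distrib_left]
        exact (Finset.inter_eq_left.2 hW').symm
      have hdisj1 : Disjoint W1 (W' ∩ D) :=
        Finset.disjoint_of_subset_left Finset.inter_subset_right
          (Finset.disjoint_of_subset_right Finset.inter_subset_right hdisj)
      have hcard1 : W1.card + (W' ∩ D).card = k + t := by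
        rw [← Finset.card_union_of_disjoint hdisj1, ← hsplit, hW'card]
      have hk1 : k ≤ W1.card := by omega
      obtain ⟨S, hSW1, hScard⟩ := Finset.exists_subset_card_eq hk1
      have hSC1 : S ⊆ C1 := hSW1.trans Finset.inter_subset_right
      have hSD : Disjoint S D := Finset.disjoint_of_subset_left hSC1 hdisj
      have hbound : ∀ v, (W' ∩ (A v ∪ D)).card ≤ (S ∩ A v).card + t := by
        intro v
        have h1 : W' ∩ (A v ∪ D) ⊆ (W1 ∩ A v) ∪ (W' ∩ D) := by
          intro x hx
          have hx1 := Finset.mem_inter.1 hx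
          rcases Finset.mem_union.1 hx1.2 with h | h
          · exact Finset.mem_union_left _ (Finset.mem_inter.2
              ⟨Finset.mem_inter.2 ⟨hx1.1, hAC1 v h⟩, h⟩)
          · exact Finset.mem_union_right _ (Finset.mem_inter.2 ⟨hx1.1, h⟩)
        have h2 : W1 ∩ A v ⊆ (S ∩ A v) ∪ (W1 \ S) := by
          intro x hx
          have hx1 := Finset.mem_inter.1 hx
          by_cases hxS : x ∈ S
          · exact Finset.mem_union_left _ (Finset.mem_inter.2 ⟨hxS, hx1.2⟩)
          · exact Finset.mem_union_right _ (Finset.mem_sdiff.2 ⟨hx1.1, hxS⟩)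
        have c1 := Finset.card_le_card h1
        have c2 := Finset.card_le_card h2
        have c3 := Finset.card_union_le (W1 ∩ A v) (W' ∩ D)
        have c4 := Finset.card_union_le (S ∩ A v) (W1 \ S)
        have c5 : (W1 \ S).card = W1.card - k := by
          rw [Finset.card_sdiff_of_subset hSW1, hScard]
        omega
      have step1 : thieleScore w2 (fun v => A v ∪ D) W'
          ≤ thieleScore w2 (fun v => A v ∪ D) (S ∪ D) := by
        unfold thieleScore
        apply Finset.sum_le_sum
        intro v _
        have : ((S ∪ D) ∩ (A v ∪ D)).card = (S ∩ A v).card + t := by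
          rw [inter_union_card_aux S (A v) D hSD, hD]
        rw [this]
        exact hw2mono (hbound v)
      have hAD : ∀ v, Disjoint (A v) D := fun v =>
        Finset.disjoint_of_subset_left (hAC1 v) hdisj
      have e1 := key_score_eq (V := V) w1 w2 q t k hrel A S D hD hSD (le_of_eq hScard)
      have e2 := key_score_eq (V := V) w1 w2 q t k hrel A W D hD hWD (le_of_eq hWcard)
      have hs := hWmax S hSC1 hScard
      have step2 : thieleScore w2 (fun v => A v ∪ D) (S ∪ D)
          ≤ thieleScore w2 (fun v => A v ∪ D) (W ∪ D) := by
        rw [← mul_le_mul_iff_right₀ hqQ, e1, e2]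
        linarith
      exact step1.trans step2
  · rintro ⟨A2, hcomp, hsub, hcard, hmax⟩
    have hDA : ∀ v, D ⊆ A2 v := fun v => (Finset.subset_union_right).trans (hcomp v).1
    set A1 := fun v => A2 v \ D with hA1def
    have hA2eq : A2 = fun v => A1 v ∪ D :=
      funext fun v => (Finset.sdiff_union_of_subset (hDA v)).symm
    have hA1TM : ∀ v, A1 v ⊆ Top v ∪ Mid v := by
      intro v x hx
      have hx1 := Finset.mem_sdiff.1 hx
      have := (hcomp v).2.1 hx1.1
      rcases Finset.mem_union.1 this with h | h
      · rcases Finset.mem_union.1 h with h' | h'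
        · exact Finset.mem_union_left _ h'
        · exact absurd h' hx1.2
      · exact Finset.mem_union_right _ h
    have hA1C1 : ∀ v, A1 v ⊆ C1 := fun v =>
      (hA1TM v).trans (by rw [← hpart v]; exact Finset.subset_union_left)
    refine ⟨A1, fun v => ⟨?_, hA1TM v, ?_⟩, hWC, hWcard, ?_⟩
    · intro x hx
      refine Finset.mem_sdiff.2 ⟨(hcomp v).1 (Finset.mem_union_left _ hx), ?_⟩
      exact Finset.disjoint_left.1 hdisj (hTC1 v hx)
    · intro c c' hp hc'
      have hcM : c ∈ Mid v := (hdom v c c' hp).1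
      have : c ∈ A2 v := (hcomp v).2.2 c c' hp (Finset.mem_sdiff.1 hc').1
      exact Finset.mem_sdiff.2 ⟨this, Finset.disjoint_left.1 hdisj (hMC1 v hcM)⟩
    · intro W' hW' hW'card
      have hW'D : Disjoint W' D := Finset.disjoint_of_subset_left hW' hdisj
      have h1 := hmax (W' ∪ D) (Finset.union_subset_union hW' le_rfl)
        (by rw [Finset.card_union_of_disjoint hW'D, hW'card, hD])
      rw [hA2eq] at h1
      have e1 := key_score_eq (V := V) w1 w2 q t k hrel A1 W' D hD hW'D (le_of_eq hW'card)
      have e2 := key_score_eq (V := V) w1 w2 q t k hrel A1 W D hD hWD (le_of_eq hWcard)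
      nlinarith [h1, e1, e2]
end

section
/- Let w1 and w2 be weight functions and let k, q > 0 and t ≥ 0 be integers such that w1(x) = q·(w2(x+t) − w2(t)) for every x ∈ {0, 1, …, k}. Let A1 be an approval profile over a candidate set C1, let D be a set of candidates disjoint from C1 with |D| = t, and let A2 be the approval profile over C1 ∪ D with A2(v) = A1(v) ∪ D for every voter v. Then for all W, F ⊆ C1 with |W| ≤ k and |F| ≤ k: s_{w1}(A1, W) − s_{w1}(A1, F) = q·(s_{w2}(A2, W ∪ D) − s_{w2}(A2, F ∪ D)). -/
open Finset

variable {V C : Type*}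

theorem stmt1 [Fintype V] [DecidableEq C]
    (w1 w2 : ℕ → ℚ)
    (hw1mono : Monotone w1) (hw10 : w1 0 = 0)
    (hw2mono : Monotone w2) (hw20 : w2 0 = 0)
    (k q t : ℕ) (hk : 0 < k) (hq : 0 < q)
    (hrel : ∀ x ≤ k, w1 x = (q : ℚ) * (w2 (x + t) - w2 t))
    (C1 D : Finset C) (hdisj : Disjoint C1 D) (hD : D.card = t)
    (A1 : V → Finset C) (hA1 : ∀ v, A1 v ⊆ C1)
    (W F : Finset C) (hWC : W ⊆ C1) (hFC : F ⊆ C1)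
    (hWk : W.card ≤ k) (hFk : F.card ≤ k) :
    thieleScore w1 A1 W - thieleScore w1 A1 F =
      (q : ℚ) * (thieleScore w2 (fun v => A1 v ∪ D) (W ∪ D) -
        thieleScore w2 (fun v => A1 v ∪ D) (F ∪ D)) := by
  have key : ∀ S : Finset C, S ⊆ C1 → S.card ≤ k →
      thieleScore w1 A1 S =
        (q : ℚ) * (thieleScore w2 (fun v => A1 v ∪ D) (S ∪ D)
          - (Fintype.card V : ℚ) * w2 t) := by
    intro S hSC hSk
    have hpt : ∀ v : V, ((S ∪ D) ∩ (A1 v ∪ D)).card = (S ∩ A1 v).card + t := by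
      intro v
      have h1 : (S ∪ D) ∩ (A1 v ∪ D) = (S ∩ A1 v) ∪ D := by
        ext x
        simp only [mem_inter, mem_union]
        constructor
        · rintro ⟨hx1, hx2⟩
          rcases hx1 with h | h
          · rcases hx2 with h' | h'
            · exact Or.inl ⟨h, h'⟩
            · exact Or.inr h'
          · exact Or.inr h
        · rintro (⟨h, h'⟩ | h)
          · exact ⟨Or.inl h, Or.inl h'⟩
          · exact ⟨Or.inr h, Or.inr h⟩
      have hd : Disjoint (S ∩ A1 v) D :=
        hdisj.mono_left (inter_subset_left.trans hSC)
      rw [h1, card_union_of_disjoint hd, hD]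
    unfold thieleScore
    have h2 : ∑ v : V, w2 ((S ∪ D) ∩ ((fun v => A1 v ∪ D) v)).card
        = ∑ v : V, w2 ((S ∩ A1 v).card + t) :=
      Finset.sum_congr rfl fun v _ => by rw [hpt v]
    have h3 : ∑ v : V, w1 (S ∩ A1 v).card
        = ∑ v : V, (q : ℚ) * (w2 ((S ∩ A1 v).card + t) - w2 t) :=
      Finset.sum_congr rfl fun v _ =>
        hrel _ (le_trans (card_le_card inter_subset_left) hSk)
    rw [h2, h3]
    simp only [mul_sub, Finset.sum_sub_distrib, Finset.mul_sum, Finset.sum_const,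
      nsmul_eq_mul, Finset.card_univ]
    ring
  rw [key W hWC hWk, key F hFC hFk]
  ring
end

section
/- Let w be a weight function, let C2 = C1 ∪ D where C1 and D are disjoint and |D| = t, and let A be an approval profile over C2 such that D ⊆ A(v) for every voter v. Then for every H ⊆ C2 with |H| = k + t there exists F ⊆ H ∖ D with |F| = k and s_w(A, F ∪ D) ≥ s_w(A, H). -/
/-!
Any `k` candidates `F` of `H \ D` will do. Every voter approves all of `D`, so `F ∪ D` gives each
voter exactly `t` approved candidates more than `F` does, while `H` gives at most `|H \ F| = t`
more; monotonicity of `w` then compares the scores voter by voter.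
-/

open Finset

variable {V C : Type*}

section CardLemmas

variable [DecidableEq C]

theorem card_inter_le_card_inter_add_card_sdiff (F H S : Finset C) :
    (H ∩ S).card ≤ (F ∩ S).card + (H \ F).card :=
  calc (H ∩ S).card ≤ ((F ∩ S) ∪ (H \ F)).card := card_le_card fun a ha => by
        simp only [mem_inter, mem_union, mem_sdiff] at ha ⊢
        tauto
    _ ≤ (F ∩ S).card + (H \ F).card := card_union_le _ _

theorem card_union_inter_of_subset {F D S : Finset C} (hFD : Disjoint F D) (hDS : D ⊆ S) :
    ((F ∪ D) ∩ S).card = (F ∩ S).card + D.card := by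
  rw [union_inter_distrib_right, inter_eq_left.2 hDS,
    card_union_of_disjoint (hFD.mono_left inter_subset_left)]

end CardLemmas

theorem thieleScore_le_of_card_inter_le [Fintype V] [DecidableEq C] {w : ℕ → ℚ}
    (hw : Monotone w) {A : V → Finset C} {S T : Finset C}
    (h : ∀ v, (S ∩ A v).card ≤ (T ∩ A v).card) : thieleScore w A S ≤ thieleScore w A T :=
  sum_le_sum fun v _ => hw (h v)

theorem stmt2_general [Fintype V] [DecidableEq C]
    (w : ℕ → ℚ) (hwmono : Monotone w)
    (k t : ℕ) (D : Finset C) (hD : D.card = t)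
    (A : V → Finset C) (hDA : ∀ v, D ⊆ A v)
    (H : Finset C) (hHcard : H.card = k + t) :
    ∃ F ⊆ H \ D, F.card = k ∧ thieleScore w A H ≤ thieleScore w A (F ∪ D) := by
  have hk : k ≤ (H \ D).card := by
    have := card_le_card (inter_subset_right : H ∩ D ⊆ D)
    have := card_sdiff_add_card_inter H D
    omega
  obtain ⟨F, hFsub, hFcard⟩ := exists_subset_card_eq hk
  refine ⟨F, hFsub, hFcard, thieleScore_le_of_card_inter_le hwmono fun v => ?_⟩
  have hFH : F ⊆ H := hFsub.trans sdiff_subset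
  have hHF : (H \ F).card = t := by rw [card_sdiff_of_subset hFH, hHcard, hFcard]; omega
  rw [card_union_inter_of_subset (sdiff_disjoint.mono_left hFsub) (hDA v), hD, ← hHF]
  exact card_inter_le_card_inter_add_card_sdiff F H (A v)

theorem stmt2 [Fintype V] [DecidableEq C]
    (w : ℕ → ℚ) (hwmono : Monotone w) (hw0 : w 0 = 0) (hwnonneg : ∀ x, 0 ≤ w x)
    (k t : ℕ) (C1 D : Finset C) (hdisj : Disjoint C1 D) (hD : D.card = t)
    (A : V → Finset C) (hA : ∀ v, A v ⊆ C1 ∪ D) (hDA : ∀ v, D ⊆ A v)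
    (H : Finset C) (hH : H ⊆ C1 ∪ D) (hHcard : H.card = k + t) :
    ∃ F ⊆ H \ D, F.card = k ∧ thieleScore w A H ≤ thieleScore w A (F ∪ D) :=
  stmt2_general w hwmono k t D hD A hDA H hHcard
end

section
/- Let A and A' be approval profiles over a candidate set C and let W ⊆ C with |W| = k. Suppose that for every voter v we have A(v) ⊆ A'(v) and A'(v) ∖ A(v) ⊆ W (each voter only adds approvals of candidates in W). If W is a winning committee of size k under Approval Voting in A, then W is a winning committee of size k under Approval Voting in A'. -/
open Finset

variable {V C : Type*}

/-- The Approval Voting (AV) score of a set `S` under approval profile `A`,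
i.e. the `w`-Thiele score with `w x = x`. -/
def avScore [Fintype V] [DecidableEq C] (A : V → Finset C) (S : Finset C) : ℚ :=
  ∑ v, ((S ∩ A v).card : ℚ)

/-- `W` is a winning committee of size `k` under Approval Voting in `A`. -/
def IsWinningAV [Fintype V] [DecidableEq C] (k : ℕ) (A : V → Finset C) (W : Finset C) : Prop :=
  W.card = k ∧ ∀ W' : Finset C, W'.card = k → avScore A W' ≤ avScore A W

lemma avScore_split [Fintype V] [DecidableEq C] (A A' : V → Finset C)
    (hsub : ∀ v, A v ⊆ A' v) (S : Finset C) :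
    avScore A' S = avScore A S + ∑ v, ((S ∩ (A' v \ A v)).card : ℚ) := by
  unfold avScore
  rw [← Finset.sum_add_distrib]
  refine Finset.sum_congr rfl fun v _ => ?_
  have h1 : S ∩ A' v = (S ∩ A v) ∪ (S ∩ (A' v \ A v)) := by
    rw [← Finset.inter_union_distrib_left, Finset.union_sdiff_of_subset (hsub v)]
  have h2 : Disjoint (S ∩ A v) (S ∩ (A' v \ A v)) := by
    refine Finset.disjoint_left.2 fun a ha ha' => ?_
    exact ((Finset.mem_inter.1 ha').2 |> Finset.mem_sdiff.1).2 (Finset.mem_inter.1 ha).2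
  rw [h1, Finset.card_union_of_disjoint h2]
  push_cast
  ring

theorem stmt3 [Fintype V] [DecidableEq C]
    (k : ℕ) (A A' : V → Finset C) (W : Finset C) (hW : W.card = k)
    (hsub : ∀ v, A v ⊆ A' v) (hadd : ∀ v, A' v \ A v ⊆ W)
    (hwin : IsWinningAV k A W) :
    IsWinningAV k A' W := by
  refine ⟨hW, fun W' hW' => ?_⟩
  rw [avScore_split A A' hsub W, avScore_split A A' hsub W']
  refine add_le_add (hwin.2 W' hW') (Finset.sum_le_sum fun v _ => ?_)
  have h1 : W ∩ (A' v \ A v) = A' v \ A v := Finset.inter_eq_right.2 (hadd v)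
  rw [h1]
  exact_mod_cast Finset.card_le_card (Finset.inter_subset_right)
end

section
/- Let A and A' be approval profiles over a candidate set C and let W ⊆ C with |W| = k. Suppose that for every voter v we have A'(v) ⊆ A(v) and (A(v) ∖ A'(v)) ∩ W = ∅ (each voter only removes approvals of candidates not in W). If W is a winning committee of size k under Approval Voting in A, then W is a winning committee of size k under Approval Voting in A'. -/
open Finset

variable {V C : Type*}

theorem inter_eq_inter_of_sdiff_inter_eq_empty [DecidableEq C] {s t u : Finset C}
    (hts : t ⊆ s) (h : (s \ t) ∩ u = ∅) : u ∩ t = u ∩ s := by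
  refine Subset.antisymm (inter_subset_inter_left hts) fun c hc => ?_
  rw [mem_inter] at hc ⊢
  refine ⟨hc.1, by_contra fun hct => ?_⟩
  exact (eq_empty_iff_forall_notMem.mp h) c (mem_inter.mpr ⟨mem_sdiff.mpr ⟨hc.2, hct⟩, hc.1⟩)

section avScore

variable [Fintype V] [DecidableEq C]

theorem avScore_mono {A A' : V → Finset C} (hsub : ∀ v, A' v ⊆ A v) (S : Finset C) :
    avScore A' S ≤ avScore A S :=
  sum_le_sum fun v _ => by exact_mod_cast card_le_card (inter_subset_inter_left (hsub v))

theorem avScore_congr {A A' : V → Finset C} {S : Finset C} (h : ∀ v, S ∩ A' v = S ∩ A v) :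
    avScore A' S = avScore A S :=
  sum_congr rfl fun v _ => by rw [h v]

theorem IsWinningAV.of_avScore_le {k : ℕ} {A A' : V → Finset C} {W : Finset C}
    (hwin : IsWinningAV k A W) (hle : ∀ S, avScore A' S ≤ avScore A S)
    (hW : avScore A' W = avScore A W) : IsWinningAV k A' W :=
  ⟨hwin.1, fun W' hW' => (hle W').trans <| (hwin.2 W' hW').trans_eq hW.symm⟩

end avScore

theorem stmt4_general [Fintype V] [DecidableEq C]
    (k : ℕ) (A A' : V → Finset C) (W : Finset C)
    (hsub : ∀ v, A' v ⊆ A v) (hrem : ∀ v, (A v \ A' v) ∩ W = ∅)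
    (hwin : IsWinningAV k A W) :
    IsWinningAV k A' W :=
  hwin.of_avScore_le (avScore_mono hsub) <|
    avScore_congr fun v => inter_eq_inter_of_sdiff_inter_eq_empty (hsub v) (hrem v)

theorem stmt4 [Fintype V] [DecidableEq C]
    (k : ℕ) (A A' : V → Finset C) (W : Finset C) (hW : W.card = k)
    (hsub : ∀ v, A' v ⊆ A v) (hrem : ∀ v, (A v \ A' v) ∩ W = ∅)
    (hwin : IsWinningAV k A W) :
    IsWinningAV k A' W :=
  stmt4_general k A A' W hsub hrem hwin
end

section
/- Let P be a 3VA partial profile over a candidate set C and let W ⊆ C with |W| = k. Define the completion A* of P by A*(v) = Top(v) ∪ (Middle(v) ∩ W) for every voter v. Then W is a possible committee of size k under Approval Voting if and only if W is a winning committee of size k under Approval Voting in A*. -/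
open Finset

variable {V C : Type*}

/-- `A` is a completion of the 3VA partial profile given by `Top` and `Mid`:
each voter approves `Top v` together with an arbitrary subset of `Mid v`. -/
def Is3VACompletion [DecidableEq C] (Top Mid : V → Finset C) (A : V → Finset C) : Prop :=
  ∀ v, Top v ⊆ A v ∧ A v ⊆ Top v ∪ Mid v

theorem stmt5 [Fintype V] [Fintype C] [DecidableEq C]
    (k : ℕ) (Top Mid Bot : V → Finset C)
    (hpart : ∀ v, Top v ∪ Mid v ∪ Bot v = Finset.univ)
    (hTM : ∀ v, Disjoint (Top v) (Mid v)) (hTB : ∀ v, Disjoint (Top v) (Bot v))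
    (hMB : ∀ v, Disjoint (Mid v) (Bot v))
    (W : Finset C) (hW : W.card = k) :
    (∃ A : V → Finset C, Is3VACompletion Top Mid A ∧ IsWinningAV k A W) ↔
    IsWinningAV k (fun v => Top v ∪ (Mid v ∩ W)) W := by
  constructor
  · rintro ⟨A, hcomp, hWcard, hwin⟩
    refine ⟨hW, fun W' hW' => ?_⟩
    have key : ∀ v : V, (W' ∩ (Top v ∪ Mid v ∩ W)).card + (W ∩ A v).card ≤
        (W' ∩ A v).card + (W ∩ (Top v ∪ Mid v ∩ W)).card := by
      intro v
      obtain ⟨h1, h2⟩ := hcomp v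
      set T := Top v; set M := Mid v; set Av := A v
      have hunion : W ∩ (T ∪ M ∩ W) = (W ∩ Av) ∪ ((M ∩ W) \ Av) := by
        ext x
        simp only [mem_inter, mem_union, mem_sdiff]
        constructor
        · rintro ⟨hxW, hx⟩
          by_cases hA : x ∈ Av
          · exact Or.inl ⟨hxW, hA⟩
          · rcases hx with hT | ⟨hM, _⟩
            · exact absurd (h1 hT) hA
            · exact Or.inr ⟨⟨hM, hxW⟩, hA⟩
        · rintro (⟨hxW, hA⟩ | ⟨⟨hM, hxW⟩, _⟩)
          · refine ⟨hxW, ?_⟩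
            rcases mem_union.mp (h2 hA) with hT | hM
            · exact Or.inl hT
            · exact Or.inr ⟨hM, hxW⟩
          · exact ⟨hxW, Or.inr ⟨hM, hxW⟩⟩
      have hdisj : Disjoint (W ∩ Av) ((M ∩ W) \ Av) :=
        Disjoint.mono_left inter_subset_right disjoint_sdiff
      have hcardW : (W ∩ (T ∪ M ∩ W)).card = (W ∩ Av).card + ((M ∩ W) \ Av).card := by
        rw [hunion, card_union_of_disjoint hdisj]
      have hsub : W' ∩ (T ∪ M ∩ W) ⊆ (W' ∩ Av) ∪ ((M ∩ W) \ Av) := by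
        intro x hx
        simp only [mem_inter, mem_union, mem_sdiff] at hx ⊢
        obtain ⟨hxW', hx⟩ := hx
        by_cases hA : x ∈ Av
        · exact Or.inl ⟨hxW', hA⟩
        · rcases hx with hT | ⟨hM, hxW⟩
          · exact absurd (h1 hT) hA
          · exact Or.inr ⟨⟨hM, hxW⟩, hA⟩
      have hcardW' : (W' ∩ (T ∪ M ∩ W)).card ≤ (W' ∩ Av).card + ((M ∩ W) \ Av).card :=
        le_trans (card_le_card hsub) (card_union_le _ _)
      omega
    have hsum : ∑ v, ((W' ∩ (Top v ∪ Mid v ∩ W)).card + (W ∩ A v).card) ≤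
        ∑ v, ((W' ∩ A v).card + (W ∩ (Top v ∪ Mid v ∩ W)).card) :=
      Finset.sum_le_sum fun v _ => key v
    have hA : avScore A W' ≤ avScore A W := hwin W' hW'
    simp only [Finset.sum_add_distrib] at hsum
    have hsumQ : (∑ v, (W' ∩ (Top v ∪ Mid v ∩ W)).card : ℚ) + ∑ v, ((W ∩ A v).card : ℚ) ≤
        (∑ v, ((W' ∩ A v).card : ℚ)) + ∑ v, ((W ∩ (Top v ∪ Mid v ∩ W)).card : ℚ) := by
      push_cast
      exact_mod_cast hsum
    unfold avScore at hA ⊢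
    linarith
  · intro h
    exact ⟨fun v => Top v ∪ (Mid v ∩ W),
      fun v => ⟨subset_union_left, union_subset_union_right inter_subset_left⟩, h⟩
end

section
/- Let w be a binary Thiele weight function with threshold t (w(x) = 0 for x < t and w(x) = 1 for x ≥ t), let k ≥ t, let P be a linear partial profile over C, and let W ⊆ C with |W| = k. Define the completion A* of P as follows: for each voter v with linear order c_{i_1} ≻_v ⋯ ≻_v c_{i_q} on Middle(v), if |Top(v) ∩ W| ≥ t or |(Top(v) ∪ Middle(v)) ∩ W| < t then A*(v) = Top(v); otherwise A*(v) = Top(v) ∪ {c_{i_1}, …, c_{i_j}} where j is minimal with |(Top(v) ∪ {c_{i_1}, …, c_{i_j}}) ∩ W| ≥ t. Then W is a possible committee of size k under w-Thiele if and only if W is a winning committee of size k under w-Thiele in A*. -/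
open Finset

variable {V C : Type*}

/-- `W` is a winning committee of size `k` under `w`-Thiele in `A`. -/
def IsWinning [Fintype V] [DecidableEq C] (w : ℕ → ℚ) (k : ℕ)
    (A : V → Finset C) (W : Finset C) : Prop :=
  W.card = k ∧ ∀ W' : Finset C, W'.card = k → thieleScore w A W' ≤ thieleScore w A W

/-- `A` is a completion of the linear partial profile given by `Top` and the
linear orders `ord` on the middle candidates: each voter approves `Top v`
together with a prefix of `ord v`. -/
def IsLinCompletion [DecidableEq C] (Top : V → Finset C) (ord : V → List C)
    (A : V → Finset C) : Prop :=
  ∀ v, ∃ j, A v = Top v ∪ ((ord v).take j).toFinset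

theorem stmt7 [Fintype V] [Fintype C] [DecidableEq C]
    (w : ℕ → ℚ) (t : ℕ) (ht : 1 ≤ t)
    (hw : ∀ x, w x = if x < t then (0 : ℚ) else 1)
    (k : ℕ) (hk : t ≤ k)
    (Top Mid Bot : V → Finset C)
    (hpart : ∀ v, Top v ∪ Mid v ∪ Bot v = Finset.univ)
    (hTM : ∀ v, Disjoint (Top v) (Mid v)) (hTB : ∀ v, Disjoint (Top v) (Bot v))
    (hMB : ∀ v, Disjoint (Mid v) (Bot v))
    (ord : V → List C) (hnd : ∀ v, (ord v).Nodup) (hordM : ∀ v, (ord v).toFinset = Mid v)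
    (W : Finset C) (hWcard : W.card = k)
    (Astar : V → Finset C)
    (hA1 : ∀ v, (t ≤ (Top v ∩ W).card ∨ ((Top v ∪ Mid v) ∩ W).card < t) →
      Astar v = Top v)
    (hA2 : ∀ v, (Top v ∩ W).card < t → t ≤ ((Top v ∪ Mid v) ∩ W).card →
      ∃ j, Astar v = Top v ∪ ((ord v).take j).toFinset ∧
        t ≤ ((Top v ∪ ((ord v).take j).toFinset) ∩ W).card ∧
        ∀ j' < j, ((Top v ∪ ((ord v).take j').toFinset) ∩ W).card < t) :
    (∃ A : V → Finset C, IsLinCompletion Top ord A ∧ IsWinning w k A W) ↔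
    IsWinning w k Astar W := by
  -- basic facts about w
  have w01 : ∀ n, 0 ≤ w n ∧ w n ≤ 1 := by
    intro n; rw [hw]; split <;> norm_num
  have wmono : ∀ m n, m ≤ n → w m ≤ w n := by
    intro m n hmn; rw [hw, hw]
    split <;> split <;> norm_num <;> omega
  have wone : ∀ n, t ≤ n → w n = 1 := by
    intro n hn; rw [hw]; simp [Nat.not_lt.mpr hn]
  have wzero : ∀ n, n < t → w n = 0 := by
    intro n hn; rw [hw]; simp [hn]
  -- prefixes are monotone as finsets
  have take_mono : ∀ (l : List C) (j j' : ℕ), j' ≤ j →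
      (l.take j').toFinset ⊆ (l.take j).toFinset := by
    intro l j j' h x hx
    simp only [List.mem_toFinset] at *
    have : l.take j' = (l.take j).take j' := by
      rw [List.take_take, min_eq_left h]
    rw [this] at hx
    exact List.take_subset _ _ hx
  -- any completion's approval set lies between Top and Top ∪ Mid
  have hsub : ∀ v j, Top v ∪ ((ord v).take j).toFinset ⊆ Top v ∪ Mid v := by
    intro v j
    apply Finset.union_subset_union_right
    intro x hx
    rw [← hordM v]
    simp only [List.mem_toFinset] at *
    exact List.take_subset _ _ hx
  -- Astar is a completion
  have hAstarComp : IsLinCompletion Top ord Astar := by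
    intro v
    by_cases h1 : t ≤ (Top v ∩ W).card ∨ ((Top v ∪ Mid v) ∩ W).card < t
    · exact ⟨0, by simp [hA1 v h1]⟩
    · push_neg at h1
      obtain ⟨j, hj, _, _⟩ := hA2 v (by omega) h1.2
      exact ⟨j, hj⟩
  -- key per-voter inequality
  have key : ∀ (A : V → Finset C), IsLinCompletion Top ord A → ∀ (W' : Finset C) (v : V),
      w ((W' ∩ Astar v).card) + w ((W ∩ A v).card) ≤
      w ((W ∩ Astar v).card) + w ((W' ∩ A v).card) := by
    intro A hA W' v
    obtain ⟨j', hAv⟩ := hA v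
    by_cases h1 : t ≤ (Top v ∩ W).card
    · have hAs : Astar v = Top v := hA1 v (Or.inl h1)
      have hWA : t ≤ (W ∩ Astar v).card := by
        rw [hAs, Finset.inter_comm]; exact h1
      have hsubA : Astar v ⊆ A v := by
        rw [hAs, hAv]; exact Finset.subset_union_left
      have h2 : w ((W' ∩ Astar v).card) ≤ w ((W' ∩ A v).card) :=
        wmono _ _ (Finset.card_le_card (Finset.inter_subset_inter_left hsubA))
      have := (w01 ((W ∩ A v).card)).2
      rw [wone _ hWA]
      linarith
    · by_cases h2 : ((Top v ∪ Mid v) ∩ W).card < t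
      · have hAs : Astar v = Top v := hA1 v (Or.inr h2)
        have hsubA : Astar v ⊆ A v := by
          rw [hAs, hAv]; exact Finset.subset_union_left
        have h3 : w ((W' ∩ Astar v).card) ≤ w ((W' ∩ A v).card) :=
          wmono _ _ (Finset.card_le_card (Finset.inter_subset_inter_left hsubA))
        have hWA : (W ∩ A v).card < t := by
          calc (W ∩ A v).card ≤ ((Top v ∪ Mid v) ∩ W).card := by
                rw [Finset.inter_comm]
                exact Finset.card_le_card
                  (Finset.inter_subset_inter_right (hAv ▸ hsub v j'))
            _ < t := h2
        have hWAs : (W ∩ Astar v).card < t := by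
          calc (W ∩ Astar v).card ≤ (W ∩ A v).card :=
                Finset.card_le_card (Finset.inter_subset_inter_left hsubA)
            _ < t := hWA
        rw [wzero _ hWA, wzero _ hWAs]
        linarith
      · push_neg at h1 h2
        obtain ⟨j, hAs, hge, hmin⟩ := hA2 v h1 h2
        have hWAs : t ≤ (W ∩ Astar v).card := by
          rw [hAs, Finset.inter_comm]; exact hge
        rw [wone _ hWAs]
        by_cases h3 : t ≤ (W ∩ A v).card
        · -- then j ≤ j', so Astar v ⊆ A v
          have hjj : j ≤ j' := by
            by_contra hc
            push_neg at hc
            have := hmin j' hc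
            rw [hAv, Finset.inter_comm] at h3
            omega
          have hsubA : Astar v ⊆ A v := by
            rw [hAs, hAv]
            exact Finset.union_subset_union_right (take_mono _ _ _ hjj)
          have h4 : w ((W' ∩ Astar v).card) ≤ w ((W' ∩ A v).card) :=
            wmono _ _ (Finset.card_le_card (Finset.inter_subset_inter_left hsubA))
          have := (w01 ((W ∩ A v).card)).2
          linarith
        · push_neg at h3
          rw [wzero _ h3]
          have := (w01 ((W' ∩ Astar v).card)).2
          have := (w01 ((W' ∩ A v).card)).1
          linarith
  -- sum version
  have sumkey : ∀ (A : V → Finset C), IsLinCompletion Top ord A → ∀ (W' : Finset C),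
      thieleScore w Astar W' + thieleScore w A W ≤
      thieleScore w Astar W + thieleScore w A W' := by
    intro A hA W'
    unfold thieleScore
    rw [← Finset.sum_add_distrib, ← Finset.sum_add_distrib]
    exact Finset.sum_le_sum fun v _ => key A hA W' v
  constructor
  · rintro ⟨A, hA, hAcard, hAwin⟩
    refine ⟨hWcard, fun W' hW' => ?_⟩
    have h1 := sumkey A hA W'
    have h2 := hAwin W' hW'
    linarith
  · intro h
    exact ⟨Astar, hAstarComp, h⟩
end

section
/- Let f define an ABC scoring rule, let P(v) be a poset partial vote over C (a partition Top(v), Middle(v), Bottom(v) with a partial order ≻_v on Middle(v)), and let W, W' ⊆ C with |W| = |W'| = k. Set S = Middle(v) ∩ (W ∪ W') and let R ⊆ S. Let R' = {c ∈ Middle(v) : c ∈ R, or c ≻_v c* for some c* ∈ R (via a chain in ≻_v)}, and assume R' ∩ (S ∖ R) = ∅. Let T = {c ∈ Middle(v) ∖ (S ∪ R') : there is no c' ∈ S ∖ R with c' ≻_v c}, and let c_1, …, c_t be an enumeration of T such that c_i ≻_v c_j implies i < j. For 0 ≤ j ≤ t define A_j(v) = Top(v) ∪ R' ∪ {c_1,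 …, c_j}. Then each A_j(v) is a completion of P(v) with A_j(v) ∩ S ∩ Middle(v) = R, and the maximum of f(|A(v) ∩ W'|, |A(v)|) − f(|A(v) ∩ W|, |A(v)|) over all completions A(v) of P(v) satisfying Middle(v) ∩ A(v) ∩ S = R is attained among A_0(v), …, A_t(v), i.e., it equals max over 0 ≤ j ≤ t of f(|A_j(v) ∩ W'|, |A_j(v)|) − f(|A_j(v) ∩ W|, |A_j(v)|). -/
open Finset

variable {C : Type*}

/-- `Av` is a completion of a single poset partial vote with top set `Top`,
middle set `Mid` and partial order `pref` on `Mid`. -/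
def IsVoteCompletion [DecidableEq C] (Top Mid : Finset C) (pref : C → C → Prop)
    (Av : Finset C) : Prop :=
  Top ⊆ Av ∧ Av ⊆ Top ∪ Mid ∧ ∀ c c', pref c c' → c' ∈ Av → c ∈ Av

/-! A completion `Av` with `Mid ∩ Av ∩ S = R` must contain `Top` and the candidates `R'` forced
by `R`, and all its other candidates are free, i.e. lie in `T`. Since `T` avoids `W ∪ W'`, the score
gap of `Av` depends only on `|Av|`. Prefixes of a topological sorting of `T` are closed under `pref`,
so they extend `Top ∪ R'` to completions of every admissible size. -/

theorem List.mem_take_of_rel {α : Type*} {r : α → α → Prop} {L : List α}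
    (htopo : ∀ i j : Fin L.length, i ≠ j → r (L.get i) (L.get j) → (i : ℕ) < (j : ℕ))
    {a b : α} {n : ℕ} (ha : a ∈ L) (hb : b ∈ L.take n) (hab : r a b) : a ∈ L.take n := by
  obtain ⟨j, hj, rfl⟩ := List.mem_take_iff_getElem.mp hb
  obtain ⟨i, hi, rfl⟩ := List.mem_iff_getElem.mp ha
  have hjL : j < L.length := hj.trans_le (min_le_right _ _)
  by_cases hij : i = j
  · subst hij
    exact hb
  have hlt : i < j := htopo ⟨i, hi⟩ ⟨j, hjL⟩ (by simpa [Fin.ext_iff] using hij) hab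
  exact List.mem_take_iff_getElem.mpr ⟨i, lt_min (hlt.trans (lt_min_iff.mp hj).1) hi, rfl⟩

theorem List.toFinset_take_subset {α : Type*} [DecidableEq α] (L : List α) (n : ℕ) :
    (L.take n).toFinset ⊆ L.toFinset :=
  fun _ h => List.mem_toFinset.mpr (List.mem_of_mem_take (List.mem_toFinset.mp h))

theorem Finset.isGreatest_sup'_of_forall_le {ι α : Type*} [LinearOrder α] {s : Finset ι}
    (hs : s.Nonempty) {g : ι → α} {D : Set α} (hmem : ∀ i ∈ s, g i ∈ D)
    (hle : ∀ d ∈ D, ∃ i ∈ s, d ≤ g i) : IsGreatest D (s.sup' hs g) := by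
  refine ⟨?_, fun d hd => ?_⟩
  · obtain ⟨i, hi, heq⟩ := exists_mem_eq_sup' hs g
    exact heq ▸ hmem i hi
  · obtain ⟨i, hi, hdi⟩ := hle d hd
    exact hdi.trans (le_sup' g hi)

theorem Finset.inter_eq_of_subset_union_of_disjoint [DecidableEq C] {A B T V : Finset C}
    (hBA : B ⊆ A) (hA : A ⊆ B ∪ T) (hTV : Disjoint T V) : A ∩ V = B ∩ V := by
  refine subset_antisymm (fun c hc => ?_) (inter_subset_inter hBA subset_rfl)
  obtain ⟨hcA, hcV⟩ := mem_inter.mp hc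
  rcases mem_union.mp (hA hcA) with hcB | hcT
  · exact mem_inter.mpr ⟨hcB, hcV⟩
  · exact absurd hcV (disjoint_left.mp hTV hcT)

def scoreGap [DecidableEq C] (f : ℕ → ℕ → ℝ) (W W' A : Finset C) : ℝ :=
  f (A ∩ W').card A.card - f (A ∩ W).card A.card

theorem exists_scoreGap_eq_take [DecidableEq C] (f : ℕ → ℕ → ℝ) {W W' A B : Finset C}
    {L : List C} (hL : L.Nodup) (hBL : Disjoint B L.toFinset)
    (hLW : Disjoint L.toFinset (W ∪ W')) (hBA : B ⊆ A) (hA : A ⊆ B ∪ L.toFinset) :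
    ∃ j ≤ L.length, scoreGap f W W' A = scoreGap f W W' (B ∪ (L.take j).toFinset) := by
  have hcard : ∀ j ≤ L.length, (B ∪ (L.take j).toFinset).card = B.card + j := fun j hj => by
    rw [card_union_of_disjoint (hBL.mono_right (L.toFinset_take_subset j)),
      List.toFinset_card_of_nodup (hL.sublist (L.take_sublist j)), List.length_take,
      min_eq_left hj]
  have hAcard : A.card ≤ B.card + L.length := by
    rw [← hcard L.length le_rfl, List.take_length]
    exact card_le_card hA
  have hBcard : B.card ≤ A.card := card_le_card hBA
  set j := A.card - B.card
  have hinter : ∀ V ⊆ W ∪ W', A ∩ V = (B ∪ (L.take j).toFinset) ∩ V := fun V hV =>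
    (inter_eq_of_subset_union_of_disjoint hBA hA (hLW.mono_right hV)).trans
      (inter_eq_of_subset_union_of_disjoint subset_union_left
        (union_subset_union_right (L.toFinset_take_subset j)) (hLW.mono_right hV)).symm
  refine ⟨j, by omega, ?_⟩
  rw [scoreGap, scoreGap, hinter W subset_union_left, hinter W' subset_union_right,
    hcard j (by omega), Nat.add_sub_cancel' hBcard]

section PartialVote

variable {Top Mid S R R' T : Finset C} {pref : C → C → Prop}

theorem mem_of_pref_of_mem_forced (hdom : ∀ c c', pref c c' → c ∈ Mid ∧ c' ∈ Mid)
    (htrans : Transitive pref)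
    (hR' : ∀ c, c ∈ R' ↔ c ∈ Mid ∧ (c ∈ R ∨ ∃ cs ∈ R, pref c cs))
    {c c' : C} (hp : pref c c') (hc' : c' ∈ R') : c ∈ R' := by
  refine (hR' c).2 ⟨(hdom c c' hp).1, Or.inr ?_⟩
  rcases ((hR' c').1 hc').2 with hc'R | ⟨cs, hcs, hp'⟩
  · exact ⟨c', hc'R, hp⟩
  · exact ⟨cs, hcs, htrans hp hp'⟩

variable [DecidableEq C]

theorem mem_forced_or_mem_free_of_pref (hdom : ∀ c c', pref c c' → c ∈ Mid ∧ c' ∈ Mid)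
    (htrans : Transitive pref)
    (hR' : ∀ c, c ∈ R' ↔ c ∈ Mid ∧ (c ∈ R ∨ ∃ cs ∈ R, pref c cs))
    (hT : ∀ c, c ∈ T ↔ (c ∈ Mid ∧ c ∉ S ∪ R') ∧ ∀ c' ∈ S \ R, ¬ pref c' c)
    {c c' : C} (hp : pref c c') (hc' : c' ∈ T) : c ∈ R' ∨ c ∈ T := by
  have hcMid := (hdom c c' hp).1
  have hc'free := ((hT c').1 hc').2
  by_cases hcR : c ∈ R
  · exact Or.inl ((hR' c).2 ⟨hcMid, Or.inl hcR⟩)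
  by_cases hcR' : c ∈ R'
  · exact Or.inl hcR'
  have hcS : c ∉ S := fun hcS => hc'free c (mem_sdiff.mpr ⟨hcS, hcR⟩) hp
  refine Or.inr ((hT c).2 ⟨⟨hcMid, ?_⟩, fun d hd hdc => hc'free d hd (htrans hdc hp)⟩)
  simp only [mem_union, not_or]
  exact ⟨hcS, hcR'⟩

theorem isVoteCompletion_take (hTM : Disjoint Top Mid)
    (hdom : ∀ c c', pref c c' → c ∈ Mid ∧ c' ∈ Mid) (htrans : Transitive pref)
    (hR' : ∀ c, c ∈ R' ↔ c ∈ Mid ∧ (c ∈ R ∨ ∃ cs ∈ R, pref c cs))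
    (hT : ∀ c, c ∈ T ↔ (c ∈ Mid ∧ c ∉ S ∪ R') ∧ ∀ c' ∈ S \ R, ¬ pref c' c)
    {L : List C} (hLT : L.toFinset = T)
    (htopo : ∀ i j : Fin L.length, i ≠ j → pref (L.get i) (L.get j) → (i : ℕ) < (j : ℕ))
    (j : ℕ) : IsVoteCompletion Top Mid pref (Top ∪ R' ∪ (L.take j).toFinset) := by
  have hR'Mid : R' ⊆ Mid := fun c hc => ((hR' c).1 hc).1
  have htakeT : (L.take j).toFinset ⊆ T := hLT ▸ L.toFinset_take_subset j
  have hTMid : T ⊆ Mid := fun c hc => ((hT c).1 hc).1.1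
  refine ⟨subset_union_left.trans subset_union_left,
    union_subset (union_subset_union_right hR'Mid)
      ((htakeT.trans hTMid).trans subset_union_right), fun c c' hp hc' => ?_⟩
  simp only [mem_union] at hc' ⊢
  rcases hc' with (hc'Top | hc'R') | hc'L
  · exact absurd (hdom c c' hp).2 (disjoint_left.mp hTM hc'Top)
  · exact Or.inl (Or.inr (mem_of_pref_of_mem_forced hdom htrans hR' hp hc'R'))
  · rcases mem_forced_or_mem_free_of_pref hdom htrans hR' hT hp (htakeT hc'L) with hcR' | hcT
    · exact Or.inl (Or.inr hcR')
    · rw [← hLT, List.mem_toFinset] at hcT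
      rw [List.mem_toFinset] at hc'L ⊢
      exact Or.inr (List.mem_take_of_rel htopo hcT hc'L hp)

theorem union_inter_inter_eq_of_subset_free (hTM : Disjoint Top Mid) (hSMid : S ⊆ Mid)
    (hR : R ⊆ S) (hR' : ∀ c, c ∈ R' ↔ c ∈ Mid ∧ (c ∈ R ∨ ∃ cs ∈ R, pref c cs))
    (hfeas : R' ∩ (S \ R) = ∅)
    (hT : ∀ c, c ∈ T ↔ (c ∈ Mid ∧ c ∉ S ∪ R') ∧ ∀ c' ∈ S \ R, ¬ pref c' c)
    {X : Finset C} (hX : X ⊆ T) : (Top ∪ R' ∪ X) ∩ S ∩ Mid = R := by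
  ext c
  simp only [mem_inter, mem_union]
  constructor
  · rintro ⟨⟨(hcTop | hcR') | hcX, hcS⟩, hcMid⟩
    · exact absurd hcMid (disjoint_left.mp hTM hcTop)
    · by_contra hcR
      have : c ∈ R' ∩ (S \ R) := mem_inter.mpr ⟨hcR', mem_sdiff.mpr ⟨hcS, hcR⟩⟩
      simp [hfeas] at this
    · exact absurd (mem_union_left _ hcS) ((hT c).1 (hX hcX)).1.2
  · intro hcR
    have hcMid := hSMid (hR hcR)
    exact ⟨⟨Or.inl (Or.inr ((hR' c).2 ⟨hcMid, Or.inl hcR⟩)), hR hcR⟩, hcMid⟩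

theorem subset_union_free_of_isVoteCompletion (hSMid : S ⊆ Mid)
    (hR' : ∀ c, c ∈ R' ↔ c ∈ Mid ∧ (c ∈ R ∨ ∃ cs ∈ R, pref c cs))
    (hT : ∀ c, c ∈ T ↔ (c ∈ Mid ∧ c ∉ S ∪ R') ∧ ∀ c' ∈ S \ R, ¬ pref c' c)
    {Av : Finset C} (hAv : IsVoteCompletion Top Mid pref Av) (hAvR : Mid ∩ Av ∩ S = R) :
    Top ∪ R' ⊆ Av ∧ Av ⊆ Top ∪ R' ∪ T := by
  obtain ⟨hTopAv, hAvTM, hclosed⟩ := hAv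
  have hmemR : ∀ c ∈ Av, c ∈ S → c ∈ R := fun c hc hcS =>
    hAvR ▸ mem_inter.mpr ⟨mem_inter.mpr ⟨hSMid hcS, hc⟩, hcS⟩
  have hRAv : R ⊆ Av := fun c hc => (mem_inter.mp (mem_inter.mp (hAvR ▸ hc)).1).2
  refine ⟨union_subset hTopAv fun c hc => ?_, fun c hc => ?_⟩
  · rcases ((hR' c).1 hc).2 with hcR | ⟨cs, hcs, hp⟩
    · exact hRAv hcR
    · exact hclosed c cs hp (hRAv hcs)
  simp only [mem_union]
  rcases mem_union.mp (hAvTM hc) with hcTop | hcMid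
  · exact Or.inl (Or.inl hcTop)
  by_cases hcR' : c ∈ R'
  · exact Or.inl (Or.inr hcR')
  have hcS : c ∉ S := fun hcS => hcR' ((hR' c).2 ⟨hcMid, Or.inl (hmemR c hc hcS)⟩)
  refine Or.inr ((hT c).2 ⟨⟨hcMid, by simp [hcS, hcR']⟩, fun d hd hp => ?_⟩)
  exact (mem_sdiff.mp hd).2 (hmemR d (hclosed d c hp hc) (mem_sdiff.mp hd).1)

end PartialVote

theorem stmt10_general [DecidableEq C]
    (f : ℕ → ℕ → ℝ)
    (Top Mid : Finset C) (pref : C → C → Prop)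
    (hTM : Disjoint Top Mid)
    (hdom : ∀ c c', pref c c' → c ∈ Mid ∧ c' ∈ Mid)
    (htrans : Transitive pref)
    (W W' : Finset C)
    (S : Finset C) (hS : S = Mid ∩ (W ∪ W'))
    (R : Finset C) (hR : R ⊆ S)
    -- `R'` consists of the candidates in `Mid` approved whenever `R` is approved
    (R' : Finset C)
    (hR' : ∀ c, c ∈ R' ↔ c ∈ Mid ∧ (c ∈ R ∨ ∃ cs ∈ R, pref c cs))
    (hfeas : R' ∩ (S \ R) = ∅)
    -- `T` consists of the remaining candidates approvable without touching `S ∖ R`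
    (T : Finset C)
    (hT : ∀ c, c ∈ T ↔ (c ∈ Mid ∧ c ∉ S ∪ R') ∧ ∀ c' ∈ S \ R, ¬ pref c' c)
    -- `L = [c_1, …, c_t]` is a topological sorting of `T` w.r.t. `pref`
    (L : List C) (hLnd : L.Nodup) (hLT : L.toFinset = T)
    (htopo : ∀ i j : Fin L.length, i ≠ j → pref (L.get i) (L.get j) → (i : ℕ) < (j : ℕ)) :
    (∀ j ≤ L.length,
        IsVoteCompletion Top Mid pref (Top ∪ R' ∪ (L.take j).toFinset) ∧
        (Top ∪ R' ∪ (L.take j).toFinset) ∩ S ∩ Mid = R) ∧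
    IsGreatest {d : ℝ | ∃ Av : Finset C, IsVoteCompletion Top Mid pref Av ∧
        Mid ∩ Av ∩ S = R ∧
        d = f ((Av ∩ W').card) Av.card - f ((Av ∩ W).card) Av.card}
      ((Finset.range (L.length + 1)).sup' Finset.nonempty_range_add_one
        (fun j => f (((Top ∪ R' ∪ (L.take j).toFinset) ∩ W').card)
                    (Top ∪ R' ∪ (L.take j).toFinset).card -
                  f (((Top ∪ R' ∪ (L.take j).toFinset) ∩ W).card)
                    (Top ∪ R' ∪ (L.take j).toFinset).card)) := by
  have hSMid : S ⊆ Mid := hS ▸ inter_subset_left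
  have hA : ∀ j, IsVoteCompletion Top Mid pref (Top ∪ R' ∪ (L.take j).toFinset) ∧
      (Top ∪ R' ∪ (L.take j).toFinset) ∩ S ∩ Mid = R := fun j =>
    ⟨isVoteCompletion_take hTM hdom htrans hR' hT hLT htopo j,
      union_inter_inter_eq_of_subset_free hTM hSMid hR hR' hfeas hT
        (hLT ▸ L.toFinset_take_subset j)⟩
  refine ⟨fun j _ => hA j, isGreatest_sup'_of_forall_le _ (fun j _ => ?_) ?_⟩
  · refine ⟨_, (hA j).1, ?_, rfl⟩
    rw [inter_comm Mid, inter_right_comm]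
    exact (hA j).2
  rintro _ ⟨Av, hAv, hAvR, rfl⟩
  obtain ⟨hlow, hhigh⟩ := subset_union_free_of_isVoteCompletion hSMid hR' hT hAv hAvR
  -- candidates of `T` lie in `Mid` but outside `S = Mid ∩ (W ∪ W')`
  have hTW : Disjoint T (W ∪ W') := disjoint_left.mpr fun c hcT hcW =>
    ((hT c).1 hcT).1.2 (mem_union_left _ (hS ▸ mem_inter.mpr ⟨((hT c).1 hcT).1.1, hcW⟩))
  have hTopR'T : Disjoint (Top ∪ R') T := disjoint_right.mpr fun c hcT hc =>
    ((hT c).1 hcT).1.2 (mem_union_right _ ((mem_union.mp hc).resolve_left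
      fun hcTop => disjoint_left.mp hTM hcTop ((hT c).1 hcT).1.1))
  obtain ⟨j, hj, heq⟩ :=
    exists_scoreGap_eq_take f hLnd (hLT ▸ hTopR'T) (hLT ▸ hTW) hlow (hLT ▸ hhigh)
  exact ⟨j, mem_range.mpr (Nat.lt_succ_of_le hj), heq.le⟩

theorem stmt10 [Fintype C] [DecidableEq C]
    (f : ℕ → ℕ → ℝ) (hf : ∀ x x' y, x' ≤ x → f x' y ≤ f x y)
    (k : ℕ) (Top Mid Bot : Finset C) (pref : C → C → Prop)
    (hpart : Top ∪ Mid ∪ Bot = Finset.univ)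
    (hTM : Disjoint Top Mid) (hTB : Disjoint Top Bot) (hMB : Disjoint Mid Bot)
    (hdom : ∀ c c', pref c c' → c ∈ Mid ∧ c' ∈ Mid)
    (htrans : Transitive pref)
    (hanti : ∀ c c', pref c c' → pref c' c → c = c')
    (W W' : Finset C) (hW : W.card = k) (hW' : W'.card = k)
    (S : Finset C) (hS : S = Mid ∩ (W ∪ W'))
    (R : Finset C) (hR : R ⊆ S)
    -- `R'` consists of the candidates in `Mid` approved whenever `R` is approved
    (R' : Finset C)
    (hR' : ∀ c, c ∈ R' ↔ c ∈ Mid ∧ (c ∈ R ∨ ∃ cs ∈ R, pref c cs))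
    (hfeas : R' ∩ (S \ R) = ∅)
    -- `T` consists of the remaining candidates approvable without touching `S ∖ R`
    (T : Finset C)
    (hT : ∀ c, c ∈ T ↔ (c ∈ Mid ∧ c ∉ S ∪ R') ∧ ∀ c' ∈ S \ R, ¬ pref c' c)
    -- `L = [c_1, …, c_t]` is a topological sorting of `T` w.r.t. `pref`
    (L : List C) (hLnd : L.Nodup) (hLT : L.toFinset = T)
    (htopo : ∀ i j : Fin L.length, i ≠ j → pref (L.get i) (L.get j) → (i : ℕ) < (j : ℕ)) :
    (∀ j ≤ L.length,
        IsVoteCompletion Top Mid pref (Top ∪ R' ∪ (L.take j).toFinset) ∧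
        (Top ∪ R' ∪ (L.take j).toFinset) ∩ S ∩ Mid = R) ∧
    IsGreatest {d : ℝ | ∃ Av : Finset C, IsVoteCompletion Top Mid pref Av ∧
        Mid ∩ Av ∩ S = R ∧
        d = f ((Av ∩ W').card) Av.card - f ((Av ∩ W).card) Av.card}
      ((Finset.range (L.length + 1)).sup' Finset.nonempty_range_add_one
        (fun j => f (((Top ∪ R' ∪ (L.take j).toFinset) ∩ W').card)
                    (Top ∪ R' ∪ (L.take j).toFinset).card -
                  f (((Top ∪ R' ∪ (L.take j).toFinset) ∩ W).card)
                    (Top ∪ R' ∪ (L.take j).toFinset).card)) :=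
  stmt10_general f Top Mid pref hTM hdom htrans W W' S hS R hR R' hR' hfeas T hT L hLnd hLT htopo
end

section
/- Let P be a linear partial profile over C and let c be a candidate. Define the completion A* of P as follows: for each voter v, if c ∈ Top(v) ∪ Bottom(v) then A*(v) = Top(v); otherwise c ∈ Middle(v) and A*(v) = Top(v) ∪ M_v where M_v is the smallest prefix of the linear order on Middle(v) that includes c. Then c is a possible committee member of size k under Approval Voting (i.e., some completion of P has a winning committee of size k containing c) if and only if c belongs to some winning committee of size k under Approval Voting in A*. -/
open Finset

variable {V C : Type*}

/-- The individual approval score of a candidate. -/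
def indSc [Fintype V] [DecidableEq C] (A : V → Finset C) (a : C) : ℚ :=
  ∑ v, (if a ∈ A v then (1:ℚ) else 0)

lemma avScore_eq_sum [Fintype V] [DecidableEq C] (A : V → Finset C) (W : Finset C) :
    avScore A W = ∑ a ∈ W, indSc A a := by
  unfold avScore indSc
  rw [Finset.sum_comm]
  refine Finset.sum_congr rfl fun v _ => ?_
  simp [Finset.sum_boole, Finset.filter_mem_eq_inter]

lemma avScore_swap [Fintype V] [DecidableEq C] (A : V → Finset C) {W : Finset C} {c d : C}
    (hc : c ∈ W) (hd : d ∉ W) :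
    avScore A (insert d (W.erase c)) = avScore A W + indSc A d - indSc A c := by
  rw [avScore_eq_sum, avScore_eq_sum,
    Finset.sum_insert (fun h => hd (Finset.mem_of_mem_erase h)), Finset.sum_erase_eq_sub hc]
  ring

lemma card_swap [DecidableEq C] {W : Finset C} {c d : C} (hc : c ∈ W) (hd : d ∉ W) :
    (insert d (W.erase c)).card = W.card := by
  rw [Finset.card_insert_of_notMem (fun h => hd (Finset.mem_of_mem_erase h)),
    Finset.card_erase_of_mem hc]
  have := Finset.card_pos.2 ⟨c, hc⟩
  omega

lemma winning_sc_le [Fintype V] [DecidableEq C] {k : ℕ} {A : V → Finset C} {W : Finset C}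
    (hw : IsWinningAV k A W) {c d : C} (hc : c ∈ W) (hd : d ∉ W) :
    indSc A d ≤ indSc A c := by
  have h := hw.2 (insert d (W.erase c)) ((card_swap hc hd).trans hw.1)
  rw [avScore_swap A hc hd] at h
  linarith

lemma mem_take_indexOf {α : Type*} [DecidableEq α] {l : List α} {c : α} (h : c ∈ l) :
    c ∈ l.take (l.idxOf c + 1) := by
  rw [List.mem_take_iff_getElem]
  exact ⟨l.idxOf c, by simp [List.idxOf_lt_length_iff.2 h], List.getElem_idxOf _⟩

lemma indexOf_succ_le_of_mem_take {α : Type*} [DecidableEq α] {l : List α} {c : α} {j : ℕ}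
    (hnd : l.Nodup) (h : c ∈ l.take j) : l.idxOf c + 1 ≤ j := by
  rw [List.mem_take_iff_getElem] at h
  obtain ⟨i, hi, hl⟩ := h
  have : l.idxOf c = i := by subst hl; exact hnd.idxOf_getElem i _
  omega

theorem stmt12 [Fintype V] [Fintype C] [DecidableEq C]
    (k : ℕ)
    (Top Mid Bot : V → Finset C)
    (hpart : ∀ v, Top v ∪ Mid v ∪ Bot v = Finset.univ)
    (hTM : ∀ v, Disjoint (Top v) (Mid v)) (hTB : ∀ v, Disjoint (Top v) (Bot v))
    (hMB : ∀ v, Disjoint (Mid v) (Bot v))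
    (ord : V → List C) (hnd : ∀ v, (ord v).Nodup) (hordM : ∀ v, (ord v).toFinset = Mid v)
    (c : C) :
    (∃ A : V → Finset C, IsLinCompletion Top ord A ∧
        ∃ W : Finset C, c ∈ W ∧ IsWinningAV k A W) ↔
    (∃ W : Finset C, c ∈ W ∧ IsWinningAV k
        (fun v => if c ∈ Top v ∪ Bot v then Top v
          else Top v ∪ ((ord v).take ((ord v).idxOf c + 1)).toFinset) W) := by
  set Astar : V → Finset C := fun v => if c ∈ Top v ∪ Bot v then Top v
    else Top v ∪ ((ord v).take ((ord v).idxOf c + 1)).toFinset with hAstar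
  have hApos : ∀ v, c ∈ Top v ∪ Bot v → Astar v = Top v := by
    intro v h
    simp only [hAstar]
    exact if_pos h
  have hAneg : ∀ v, c ∉ Top v ∪ Bot v →
      Astar v = Top v ∪ ((ord v).take ((ord v).idxOf c + 1)).toFinset := by
    intro v h
    simp only [hAstar]
    exact if_neg h
  have hcomp : IsLinCompletion Top ord Astar := by
    intro v
    by_cases h : c ∈ Top v ∪ Bot v
    · exact ⟨0, by rw [hApos v h]; simp⟩
    · exact ⟨(ord v).idxOf c + 1, hAneg v h⟩
  -- basic facts about Astar
  have hcmid : ∀ v, c ∉ Top v ∪ Bot v → c ∈ ord v := by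
    intro v h
    have : c ∈ Top v ∪ Mid v ∪ Bot v := (hpart v) ▸ Finset.mem_univ c
    simp only [Finset.mem_union, not_or] at h this
    have : c ∈ Mid v := by tauto
    rw [← hordM v] at this
    exact List.mem_toFinset.1 this
  constructor
  · rintro ⟨A, hA, W, hcW, hWwin⟩
    -- per-voter facts
    have L1 : ∀ v, c ∈ A v → c ∈ Astar v := by
      intro v hcA
      obtain ⟨j, hj⟩ := hA v
      by_cases htb : c ∈ Top v ∪ Bot v
      · have hcT : c ∈ Top v := by
          rw [hj] at hcA
          rcases Finset.mem_union.1 hcA with h | h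
          · exact h
          · exfalso
            have hM : c ∈ Mid v := by
              rw [← hordM v]
              exact List.mem_toFinset.2 (List.mem_of_mem_take (List.mem_toFinset.1 h))
            rcases Finset.mem_union.1 htb with h' | h'
            · exact Finset.disjoint_left.1 (hTM v) h' hM
            · exact Finset.disjoint_left.1 (hMB v) hM h'
        rw [hApos v htb]
        exact hcT
      · have : c ∈ (ord v).take ((ord v).idxOf c + 1) := mem_take_indexOf (hcmid v htb)
        rw [hAneg v htb]
        exact Finset.mem_union_right _ (List.mem_toFinset.2 this)
    have L2 : ∀ v, c ∈ A v → Astar v ⊆ A v := by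
      intro v hcA
      obtain ⟨j, hj⟩ := hA v
      by_cases htb : c ∈ Top v ∪ Bot v
      · rw [hj, hApos v htb]
        exact Finset.subset_union_left
      · have hcnT : c ∉ Top v := by
          intro h; exact htb (Finset.mem_union_left _ h)
        have hctake : c ∈ (ord v).take j := by
          rw [hj] at hcA
          rcases Finset.mem_union.1 hcA with h | h
          · exact absurd h hcnT
          · exact List.mem_toFinset.1 h
        have hle : (ord v).idxOf c + 1 ≤ j := indexOf_succ_le_of_mem_take (hnd v) hctake
        have hsub : (ord v).take ((ord v).idxOf c + 1) ⊆ (ord v).take j :=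
          (List.take_prefix_take_left hle).subset
        rw [hj, hAneg v htb]
        exact Finset.union_subset_union_right (fun x hx =>
          List.mem_toFinset.2 (hsub (List.mem_toFinset.1 hx)))
    have L3 : ∀ v, c ∉ Astar v → Astar v ⊆ A v := by
      intro v hcA
      obtain ⟨j, hj⟩ := hA v
      by_cases htb : c ∈ Top v ∪ Bot v
      · rw [hj, hApos v htb]
        exact Finset.subset_union_left
      · exfalso
        apply hcA
        have : c ∈ (ord v).take ((ord v).idxOf c + 1) := mem_take_indexOf (hcmid v htb)
        rw [hAneg v htb]
        exact Finset.mem_union_right _ (List.mem_toFinset.2 this)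
    -- score inequalities
    have hkey : ∀ d, indSc Astar d + indSc A c ≤ indSc A d + indSc Astar c := by
      intro d
      unfold indSc
      rw [← Finset.sum_add_distrib, ← Finset.sum_add_distrib]
      refine Finset.sum_le_sum fun v _ => ?_
      by_cases hc1 : c ∈ A v
      · have h1 := L1 v hc1
        have h2 := L2 v hc1
        rw [if_pos hc1, if_pos h1]
        have : (if d ∈ Astar v then (1:ℚ) else 0) ≤ (if d ∈ A v then (1:ℚ) else 0) := by
          by_cases hd : d ∈ Astar v
          · simp [hd, h2 hd]
          · simp only [if_neg hd]
            split_ifs <;> norm_num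
        linarith
      · by_cases hc2 : c ∈ Astar v
        · rw [if_neg hc1, if_pos hc2]
          have h1 : (if d ∈ Astar v then (1:ℚ) else 0) ≤ 1 := by split_ifs <;> norm_num
          have h2 : (0:ℚ) ≤ (if d ∈ A v then (1:ℚ) else 0) := by split_ifs <;> norm_num
          linarith
        · have h2 := L3 v hc2
          rw [if_neg hc1, if_neg hc2]
          have : (if d ∈ Astar v then (1:ℚ) else 0) ≤ (if d ∈ A v then (1:ℚ) else 0) := by
            by_cases hd : d ∈ Astar v
            · simp [hd, h2 hd]
            · simp only [if_neg hd]
              split_ifs <;> norm_num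
          linarith
    -- find a winning committee for Astar
    obtain ⟨W0, hW0mem, hW0max⟩ := Finset.exists_max_image (Finset.univ.powersetCard k)
      (avScore Astar) ⟨W, by simp [Finset.mem_powersetCard_univ, hWwin.1]⟩
    have hW0card : W0.card = k := (Finset.mem_powersetCard_univ).1 hW0mem
    have hW0win : IsWinningAV k Astar W0 :=
      ⟨hW0card, fun W' h' => hW0max _ (by simp [Finset.mem_powersetCard_univ, h'])⟩
    by_cases hcW0 : c ∈ W0
    · exact ⟨W0, hcW0, hW0win⟩
    · -- pick the minimal-score member of W0 and swap it for c
      have hW0ne : W0.Nonempty := by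
        rw [← Finset.card_pos, hW0card, ← hWwin.1]
        exact Finset.card_pos.2 ⟨c, hcW⟩
      obtain ⟨d, hdW0, hdmin⟩ := Finset.exists_min_image W0 (indSc Astar) hW0ne
      have hdc : indSc Astar d ≤ indSc Astar c := by
        by_contra hlt
        push_neg at hlt
        -- every member of W0 would beat c in A, but they all lie in W.erase c
        have hsub : W0 ⊆ W.erase c := by
          intro e heW0
          have he : indSc Astar c < indSc Astar e := lt_of_lt_of_le hlt (hdmin e heW0)
          have heA : indSc A c < indSc A e := by
            have := hkey e
            linarith
          have heW : e ∈ W := by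
            by_contra heW
            exact absurd (winning_sc_le hWwin hcW heW) (not_le.2 heA)
          exact Finset.mem_erase.2 ⟨fun h => by simp [h] at he, heW⟩
        have := Finset.card_le_card hsub
        rw [hW0card, Finset.card_erase_of_mem hcW, hWwin.1] at this
        have hk : 1 ≤ k := by
          rw [← hWwin.1]; exact Finset.card_pos.2 ⟨c, hcW⟩
        omega
      refine ⟨insert c (W0.erase d), Finset.mem_insert_self _ _, ?_⟩
      have hcnd : c ∉ W0 := hcW0
      constructor
      · exact (card_swap hdW0 hcnd).trans hW0card
      · intro W' h'
        have := hW0win.2 W' h'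
        rw [avScore_swap Astar hdW0 hcnd]
        linarith
  · rintro ⟨W, hcW, hwin⟩
    exact ⟨Astar, hcomp, W, hcW, hwin⟩
end

section
/- Let P be a 3VA partial profile over C, let c be a candidate, and let W ⊆ C ∖ {c} with |W| = k. Define the completion A* of P by A*(v) = Top(v) ∪ (Middle(v) ∩ W) for every voter v. Then there exists a completion of P in which W defeats c under Approval Voting if and only if W defeats c under Approval Voting in A*. -/
open Finset

variable {V C : Type*}

/-- `W` (of size `k`, not containing `c`) defeats candidate `c` in profile `A`
under Approval Voting: its score is strictly greater than the score of every
size-`k` set containing `c`. -/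
def DefeatsAV [Fintype V] [DecidableEq C] (k : ℕ) (A : V → Finset C)
    (W : Finset C) (c : C) : Prop :=
  ∀ W' : Finset C, W'.card = k → c ∈ W' → avScore A W' < avScore A W

theorem stmt13 [Fintype V] [Fintype C] [DecidableEq C]
    (k : ℕ) (Top Mid Bot : V → Finset C)
    (hpart : ∀ v, Top v ∪ Mid v ∪ Bot v = Finset.univ)
    (hTM : ∀ v, Disjoint (Top v) (Mid v)) (hTB : ∀ v, Disjoint (Top v) (Bot v))
    (hMB : ∀ v, Disjoint (Mid v) (Bot v))
    (c : C) (W : Finset C) (hWc : c ∉ W) (hW : W.card = k) :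
    (∃ A : V → Finset C, Is3VACompletion Top Mid A ∧ DefeatsAV k A W c) ↔
    DefeatsAV k (fun v => Top v ∪ (Mid v ∩ W)) W c := by
  classical
  constructor
  · rintro ⟨A, hA, hdef⟩
    intro W' hW'k hcW'
    have key : ∀ v, ((W ∩ A v).card : ℚ) - (W' ∩ A v).card ≤
        ((W ∩ (Top v ∪ Mid v ∩ W)).card : ℚ) - ((W' ∩ (Top v ∪ Mid v ∩ W)).card) := by
      intro v
      obtain ⟨hT, hTM'⟩ := hA v
      set X := W ∩ (Mid v \ A v) with hX
      have h1 : W ∩ (Top v ∪ Mid v ∩ W) = (W ∩ A v) ∪ X := by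
        ext x
        simp only [hX, mem_inter, mem_union, mem_sdiff]
        constructor
        · rintro ⟨hxW, hx⟩
          by_cases hxA : x ∈ A v
          · exact Or.inl ⟨hxW, hxA⟩
          · refine Or.inr ⟨hxW, ?_, hxA⟩
            rcases hx with h | h
            · exact absurd (hT h) hxA
            · exact h.1
        · rintro (⟨hxW, hxA⟩ | ⟨hxW, hxM, hxA⟩)
          · refine ⟨hxW, ?_⟩
            rcases mem_union.mp (hTM' hxA) with h | h
            · exact Or.inl h
            · exact Or.inr ⟨h, hxW⟩
          · exact ⟨hxW, Or.inr ⟨hxM, hxW⟩⟩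
      have hdisj : Disjoint (W ∩ A v) X := by
        simp only [hX, disjoint_left]
        intro x hx hx'
        exact (mem_sdiff.mp (mem_inter.mp hx').2).2 (mem_inter.mp hx).2
      have hc1 : (W ∩ (Top v ∪ Mid v ∩ W)).card = (W ∩ A v).card + X.card := by
        rw [h1, card_union_of_disjoint hdisj]
      have h2 : W' ∩ (Top v ∪ Mid v ∩ W) ⊆ (W' ∩ A v) ∪ X := by
        intro x hx
        obtain ⟨hxW', hx⟩ := mem_inter.mp hx
        by_cases hxA : x ∈ A v
        · exact mem_union_left _ (mem_inter.mpr ⟨hxW', hxA⟩)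
        · rcases mem_union.mp hx with h | h
          · exact absurd (hT h) hxA
          · obtain ⟨hxM, hxW⟩ := mem_inter.mp h
            exact mem_union_right _ (mem_inter.mpr ⟨hxW, mem_sdiff.mpr ⟨hxM, hxA⟩⟩)
      have hc2 : (W' ∩ (Top v ∪ Mid v ∩ W)).card ≤ (W' ∩ A v).card + X.card :=
        (card_le_card h2).trans (card_union_le _ _)
      have hc1' : ((W ∩ (Top v ∪ Mid v ∩ W)).card : ℚ) = (W ∩ A v).card + X.card := by
        exact_mod_cast hc1
      have hc2' : ((W' ∩ (Top v ∪ Mid v ∩ W)).card : ℚ) ≤ (W' ∩ A v).card + X.card := by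
        exact_mod_cast hc2
      linarith
    have hsum : avScore A W - avScore A W' ≤
        avScore (fun v => Top v ∪ Mid v ∩ W) W - avScore (fun v => Top v ∪ Mid v ∩ W) W' := by
      simp only [avScore, ← Finset.sum_sub_distrib]
      exact Finset.sum_le_sum fun v _ => key v
    have := hdef W' hW'k hcW'
    linarith
  · intro h
    exact ⟨fun v => Top v ∪ Mid v ∩ W,
      fun v => ⟨subset_union_left, union_subset_union_right inter_subset_left⟩, h⟩
end

section
/- Let P be a linear partial profile over C and let c be a candidate. Define the completion A* of P as follows: for each voter v, if c ∈ Top(v) ∪ Bottom(v) then A*(v) = Top(v) ∪ Middle(v); otherwise c ∈ Middle(v), say c is the j-th candidate in the linear order on Middle(v), and A*(v) = Top(v) ∪ {the first j−1 candidates of the order}. Then c is a necessary committee member of size k under Approval Voting (i.e., every completion of P has a winning committee of size k containing c) if and only if c belongs to some winning committee of size k under Approval Voting in A*. -/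
open Finset

variable {V C : Type*}

/-!
The AV score of a committee is the sum of its members' approval counts, so no member of a
winning committee is beaten by an outsider, and an outsider may replace a member it does not lose
to. Passing from a completion `A` to `A*` never helps `c` against a rival: voter by voter, either
`A` approves `c` and `A*` does not, or `A v ⊆ A* v` and `A*` approves `c` only if `A` does. So if
`c` lies in a winning committee `W` for `A*` and `W₀` is winning for `A` but misses `c`, a member of
`W₀ \ W` does not beat `c` in `A*`, hence not in `A`, and `c` can replace it. Conversely, `A*` is
itself a completion.
-/

section ApprovalVoting

variable [Fintype V] [DecidableEq C]

def approvalCount (A : V → Finset C) (x : C) : ℕ :=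
  #{v | x ∈ A v}

lemma avScore_eq_sum_approvalCount (A : V → Finset C) (W : Finset C) :
    avScore A W = ∑ x ∈ W, (approvalCount A x : ℚ) := by
  simp only [avScore, approvalCount, ← filter_mem_eq_inter, card_filter]
  push_cast
  exact sum_comm

lemma avScore_insert_erase (A : V → Finset C) {W : Finset C} {d e : C} (hd : d ∈ W)
    (he : e ∉ W) :
    avScore A (insert e (W.erase d)) = avScore A W - approvalCount A d + approvalCount A e := by
  rw [avScore_eq_sum_approvalCount, avScore_eq_sum_approvalCount,
    sum_insert (fun h => he (mem_of_mem_erase h)), sum_erase_eq_sub hd]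
  ring

lemma card_insert_erase {W : Finset C} {d e : C} (hd : d ∈ W) (he : e ∉ W) :
    #(insert e (W.erase d)) = #W := by
  rw [card_insert_of_notMem (fun h => he (mem_of_mem_erase h)), card_erase_add_one hd]

variable {k : ℕ} {A : V → Finset C} {W : Finset C}

lemma IsWinningAV.approvalCount_le (hW : IsWinningAV k A W) {c e : C} (hc : c ∈ W)
    (he : e ∉ W) : approvalCount A e ≤ approvalCount A c := by
  have := hW.2 _ ((card_insert_erase hc he).trans hW.1)
  rw [avScore_insert_erase A hc he] at this
  exact_mod_cast (by linarith : (approvalCount A e : ℚ) ≤ approvalCount A c)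

lemma IsWinningAV.insert_erase (hW : IsWinningAV k A W) {c d : C} (hd : d ∈ W) (hc : c ∉ W)
    (hdc : approvalCount A d ≤ approvalCount A c) :
    IsWinningAV k A (insert c (W.erase d)) := by
  refine ⟨(card_insert_erase hd hc).trans hW.1, fun W' hW' => (hW.2 W' hW').trans ?_⟩
  rw [avScore_insert_erase A hd hc]
  have : (approvalCount A d : ℚ) ≤ approvalCount A c := by exact_mod_cast hdc
  linarith

lemma exists_isWinningAV [Fintype C] (A : V → Finset C) (hk : k ≤ Fintype.card C) :
    ∃ W, IsWinningAV k A W := by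
  obtain ⟨W, hW, hmax⟩ := exists_max_image (powersetCard k (univ : Finset C)) (avScore A)
    (powersetCard_nonempty.mpr (by rwa [card_univ]))
  exact ⟨W, (mem_powersetCard.mp hW).2,
    fun W' hW' => hmax W' (mem_powersetCard.mpr ⟨subset_univ _, hW'⟩)⟩

theorem exists_mem_isWinningAV_of_approvalCount_add_le [Fintype C] {B : V → Finset C} {c : C}
    (hAB : ∀ d, approvalCount A d + approvalCount B c ≤ approvalCount B d + approvalCount A c)
    (hcW : c ∈ W) (hW : IsWinningAV k B W) :
    ∃ W', c ∈ W' ∧ IsWinningAV k A W' := by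
  obtain ⟨W₀, hW₀⟩ := exists_isWinningAV A (hW.1 ▸ card_le_univ W)
  by_cases hcW₀ : c ∈ W₀
  · exact ⟨W₀, hcW₀, hW₀⟩
  obtain ⟨e, heW₀, heW⟩ : ∃ e ∈ W₀, e ∉ W := by
    by_contra! h
    exact hcW₀ (eq_of_subset_of_card_le h (hW.1.trans hW₀.1.symm).le ▸ hcW)
  have hB := hW.approvalCount_le hcW heW
  have := hAB e
  exact ⟨_, mem_insert_self c _, hW₀.insert_erase heW₀ hcW₀ (by omega)⟩

lemma approvalCount_add_le {B : V → Finset C} {c : C}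
    (hAB : ∀ v, c ∈ A v \ B v ∨ A v ⊆ B v ∧ (c ∈ B v → c ∈ A v)) (d : C) :
    approvalCount A d + approvalCount B c ≤ approvalCount B d + approvalCount A c := by
  simp only [approvalCount, card_filter, ← sum_add_distrib]
  refine sum_le_sum fun v _ => ?_
  rcases hAB v with hc | ⟨hsub, hc⟩
  · rw [mem_sdiff] at hc
    split_ifs <;> simp_all
  · have := @hsub d
    split_ifs <;> simp_all

end ApprovalVoting

lemma notMem_take_idxOf [DecidableEq C] (l : List C) (c : C) : c ∉ l.take (l.idxOf c) := by
  by_cases hc : c ∈ l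
  · rw [List.mem_take_iff_idxOf_lt hc]
    exact lt_irrefl _
  · exact fun h => hc (List.mem_of_mem_take h)

lemma mem_sdiff_or_subset_of_completion [Fintype C] [DecidableEq C] {T M B : Finset C}
    {l : List C} (hpart : T ∪ M ∪ B = univ) (hTM : Disjoint T M) (hTB : Disjoint T B)
    (hMB : Disjoint M B) (hl : l.toFinset = M) (c : C) (j : ℕ) :
    let a := T ∪ (l.take j).toFinset
    let aStar := if c ∈ T ∪ B then T ∪ M else T ∪ (l.take (l.idxOf c)).toFinset
    c ∈ a \ aStar ∨ a ⊆ aStar ∧ (c ∈ aStar → c ∈ a) := by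
  intro a aStar
  have hta : ∀ n, (l.take n).toFinset ⊆ M := fun n x hx => by
    rw [← hl, List.mem_toFinset] at *
    exact List.mem_of_mem_take hx
  by_cases hc : c ∈ T ∪ B
  · simp only [aStar, if_pos hc]
    refine Or.inr ⟨union_subset_union_right (hta j), fun hcTM => ?_⟩
    rcases mem_union.mp hc with hcT | hcB
    · exact mem_union_left _ hcT
    · rcases mem_union.mp hcTM with hcT | hcM
      · exact absurd hcB (disjoint_left.mp hTB hcT)
      · exact absurd hcB (disjoint_left.mp hMB hcM)
  simp only [aStar, if_neg hc]
  have hcM : c ∈ M := by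
    have := hpart ▸ mem_univ c
    simp only [mem_union] at this hc
    tauto
  have hcl : c ∈ l := by rwa [← List.mem_toFinset, hl]
  have hcStar : c ∉ T ∪ (l.take (l.idxOf c)).toFinset := by
    rw [mem_union, List.mem_toFinset, not_or]
    exact ⟨disjoint_right.mp hTM hcM, notMem_take_idxOf l c⟩
  by_cases hj : l.idxOf c < j
  · refine Or.inl (mem_sdiff.mpr ⟨mem_union_right _ ?_, hcStar⟩)
    rwa [List.mem_toFinset, List.mem_take_iff_idxOf_lt hcl]
  · refine Or.inr ⟨union_subset_union_right fun x hx => ?_, fun h => absurd h hcStar⟩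
    rw [List.mem_toFinset] at hx ⊢
    exact (List.take_prefix_take_left (not_lt.mp hj)).subset hx

theorem stmt14_general [Fintype V] [Fintype C] [DecidableEq C]
    (k : ℕ)
    (Top Mid Bot : V → Finset C)
    (hpart : ∀ v, Top v ∪ Mid v ∪ Bot v = Finset.univ)
    (hTM : ∀ v, Disjoint (Top v) (Mid v)) (hTB : ∀ v, Disjoint (Top v) (Bot v))
    (hMB : ∀ v, Disjoint (Mid v) (Bot v))
    (ord : V → List C) (hordM : ∀ v, (ord v).toFinset = Mid v)
    (c : C) :
    (∀ A : V → Finset C, IsLinCompletion Top ord A →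
        ∃ W : Finset C, c ∈ W ∧ IsWinningAV k A W) ↔
    (∃ W : Finset C, c ∈ W ∧ IsWinningAV k
        (fun v => if c ∈ Top v ∪ Bot v then Top v ∪ Mid v
          else Top v ∪ ((ord v).take ((ord v).idxOf c)).toFinset) W) := by
  set Astar : V → Finset C := fun v => if c ∈ Top v ∪ Bot v then Top v ∪ Mid v
    else Top v ∪ ((ord v).take ((ord v).idxOf c)).toFinset
  have hStar : IsLinCompletion Top ord Astar := fun v => by
    by_cases hc : c ∈ Top v ∪ Bot v
    · exact ⟨(ord v).length, by simp only [Astar, if_pos hc, List.take_length, hordM v]⟩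
    · exact ⟨(ord v).idxOf c, if_neg hc⟩
  refine ⟨fun h => h Astar hStar, fun ⟨W, hcW, hW⟩ A hA => ?_⟩
  refine exists_mem_isWinningAV_of_approvalCount_add_le
    (approvalCount_add_le fun v => ?_) hcW hW
  obtain ⟨j, hj⟩ := hA v
  rw [hj]
  exact mem_sdiff_or_subset_of_completion (hpart v) (hTM v) (hTB v) (hMB v) (hordM v) c j

theorem stmt14 [Fintype V] [Fintype C] [DecidableEq C]
    (k : ℕ)
    (Top Mid Bot : V → Finset C)
    (hpart : ∀ v, Top v ∪ Mid v ∪ Bot v = Finset.univ)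
    (hTM : ∀ v, Disjoint (Top v) (Mid v)) (hTB : ∀ v, Disjoint (Top v) (Bot v))
    (hMB : ∀ v, Disjoint (Mid v) (Bot v))
    (ord : V → List C) (hnd : ∀ v, (ord v).Nodup) (hordM : ∀ v, (ord v).toFinset = Mid v)
    (c : C) :
    (∀ A : V → Finset C, IsLinCompletion Top ord A →
        ∃ W : Finset C, c ∈ W ∧ IsWinningAV k A W) ↔
    (∃ W : Finset C, c ∈ W ∧ IsWinningAV k
        (fun v => if c ∈ Top v ∪ Bot v then Top v ∪ Mid v
          else Top v ∪ ((ord v).take ((ord v).idxOf c)).toFinset) W) :=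
  stmt14_general k Top Mid Bot hpart hTM hTB hMB ord hordM c
end

section
/- Let w be a binary Thiele weight function with threshold t (w(x) = 0 for x < t and w(x) = 1 for x ≥ t), let k ≥ t, let P be a linear partial profile over C, let c be a candidate, and let W ⊆ C ∖ {c} with |W| = k. Define the completion A* of P as follows: for each voter v with linear order c_{i_1} ≻_v ⋯ ≻_v c_{i_q} on Middle(v), if |Top(v) ∩ W| ≥ t or |(Top(v) ∪ Middle(v)) ∩ W| < t then A*(v) = Top(v); otherwise A*(v) = Top(v) ∪ {c_{i_1}, …, c_{i_j}} where j is minimal with |(Top(v) ∪ {c_{i_1}, …, c_{i_j}}) ∩ W| ≥ t. Then there exists a completion of P in which W defeats c under w-Thiele if and only if W defeats c under w-Thiele in A*. -/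
open Finset

variable {V C : Type*}

/-- `W` (of size `k`, not containing `c`) defeats candidate `c` in profile `A`
under `w`-Thiele: its score is strictly greater than the score of every
size-`k` set containing `c`. -/
def Defeats [Fintype V] [DecidableEq C] (w : ℕ → ℚ) (k : ℕ) (A : V → Finset C)
    (W : Finset C) (c : C) : Prop :=
  ∀ W' : Finset C, W'.card = k → c ∈ W' → thieleScore w A W' < thieleScore w A W

theorem stmt15 [Fintype V] [Fintype C] [DecidableEq C]
    (w : ℕ → ℚ) (t : ℕ) (ht : 1 ≤ t)
    (hw : ∀ x, w x = if x < t then (0 : ℚ) else 1)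
    (k : ℕ) (hk : t ≤ k)
    (Top Mid Bot : V → Finset C)
    (hpart : ∀ v, Top v ∪ Mid v ∪ Bot v = Finset.univ)
    (hTM : ∀ v, Disjoint (Top v) (Mid v)) (hTB : ∀ v, Disjoint (Top v) (Bot v))
    (hMB : ∀ v, Disjoint (Mid v) (Bot v))
    (ord : V → List C) (hnd : ∀ v, (ord v).Nodup) (hordM : ∀ v, (ord v).toFinset = Mid v)
    (c : C) (W : Finset C) (hWc : c ∉ W) (hWcard : W.card = k)
    (Astar : V → Finset C)
    (hA1 : ∀ v, (t ≤ (Top v ∩ W).card ∨ ((Top v ∪ Mid v) ∩ W).card < t) →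
      Astar v = Top v)
    (hA2 : ∀ v, (Top v ∩ W).card < t → t ≤ ((Top v ∪ Mid v) ∩ W).card →
      ∃ j, Astar v = Top v ∪ ((ord v).take j).toFinset ∧
        t ≤ ((Top v ∪ ((ord v).take j).toFinset) ∩ W).card ∧
        ∀ j' < j, ((Top v ∪ ((ord v).take j').toFinset) ∩ W).card < t) :
    (∃ A : V → Finset C, IsLinCompletion Top ord A ∧ Defeats w k A W c) ↔
    Defeats w k Astar W c := by
  -- basic facts about w
  have w0 : ∀ x, 0 ≤ w x := by intro x; rw [hw]; split <;> norm_num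
  have w1 : ∀ x, w x ≤ 1 := by intro x; rw [hw]; split <;> norm_num
  have wge : ∀ x, t ≤ x → w x = 1 := by intro x hx; rw [hw]; simp [Nat.not_lt.mpr hx]
  have wlt : ∀ x, x < t → w x = 0 := by intro x hx; rw [hw]; simp [hx]
  have wmono : ∀ x y, x ≤ y → w x ≤ w y := by
    intro x y hxy; rw [hw, hw]
    by_cases hx : x < t <;> by_cases hy : y < t <;> simp [hx, hy] <;> omega
  constructor
  · rintro ⟨A, hcomp, hdef⟩
    intro W' hW'card hcW'
    have key : ∀ v, w ((W' ∩ Astar v).card) - w ((W ∩ Astar v).card)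
        ≤ w ((W' ∩ A v).card) - w ((W ∩ A v).card) := by
      intro v
      obtain ⟨j'', hAv⟩ := hcomp v
      have hTopA : Top v ⊆ A v := by rw [hAv]; exact Finset.subset_union_left
      by_cases hcase : t ≤ (Top v ∩ W).card ∨ ((Top v ∪ Mid v) ∩ W).card < t
      · have hAs : Astar v = Top v := hA1 v hcase
        rw [hAs]
        have h1 : w ((W' ∩ Top v).card) ≤ w ((W' ∩ A v).card) :=
          wmono _ _ (Finset.card_le_card (Finset.inter_subset_inter Finset.Subset.rfl hTopA))
        have h2 : w ((W ∩ A v).card) ≤ w ((W ∩ Top v).card) := by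
          rcases hcase with hc | hc
          · rw [wge ((W ∩ Top v).card) (by rw [Finset.inter_comm]; exact hc)]; exact w1 _
          · have hsub : A v ⊆ Top v ∪ Mid v := by
              rw [hAv]
              apply Finset.union_subset Finset.subset_union_left
              intro x hx
              apply Finset.mem_union_right
              rw [← hordM v, List.mem_toFinset]
              exact List.take_subset _ _ (List.mem_toFinset.mp hx)
            have : (W ∩ A v).card < t := by
              calc (W ∩ A v).card ≤ ((Top v ∪ Mid v) ∩ W).card := by
                    rw [Finset.inter_comm]
                    exact Finset.card_le_card (Finset.inter_subset_inter hsub Finset.Subset.rfl)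
                _ < t := hc
            rw [wlt _ this]; exact w0 _
        linarith
      · push_neg at hcase
        obtain ⟨j, hAs, hjt, hjmin⟩ := hA2 v hcase.1 hcase.2
        have hW1 : w ((W ∩ Astar v).card) = 1 := by
          rw [hAs, Finset.inter_comm]; exact wge _ hjt
        by_cases hWA : t ≤ (W ∩ A v).card
        · -- then j ≤ j'', so Astar v ⊆ A v
          have hj'' : ¬ j'' < j := by
            intro hlt
            have := hjmin j'' hlt
            rw [hAv, Finset.inter_comm] at hWA
            omega
          have hsub : Astar v ⊆ A v := by
            rw [hAs, hAv]
            apply Finset.union_subset_union_right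
            intro x hx
            rw [List.mem_toFinset] at hx ⊢
            have : (ord v).take j = ((ord v).take j'').take j := by
              rw [List.take_take, Nat.min_eq_left (Nat.le_of_not_lt hj'')]
            rw [this] at hx
            exact List.take_subset _ _ hx
          have h1 : w ((W' ∩ Astar v).card) ≤ w ((W' ∩ A v).card) :=
            wmono _ _ (Finset.card_le_card (Finset.inter_subset_inter Finset.Subset.rfl hsub))
          rw [hW1, wge _ hWA]
          linarith
        · rw [hW1, wlt _ (Nat.lt_of_not_le hWA)]
          have := w1 ((W' ∩ Astar v).card)
          have := w0 ((W' ∩ A v).card)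
          linarith
    have hsum : thieleScore w Astar W' - thieleScore w Astar W
        ≤ thieleScore w A W' - thieleScore w A W := by
      unfold thieleScore
      rw [← Finset.sum_sub_distrib, ← Finset.sum_sub_distrib]
      exact Finset.sum_le_sum fun v _ => key v
    have := hdef W' hW'card hcW'
    linarith
  · intro hdef
    refine ⟨Astar, ?_, hdef⟩
    intro v
    by_cases h : t ≤ (Top v ∩ W).card ∨ ((Top v ∪ Mid v) ∩ W).card < t
    · exact ⟨0, by simp [hA1 v h]⟩
    · push_neg at h
      obtain ⟨j, hj, -, -⟩ := hA2 v h.1 h.2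
      exact ⟨j, hj⟩
end

section
/- Let P be a poset partial profile over C and let W ⊆ C with |W| = k. Define the completion A* of P by: A*(v) = Top(v) ∪ Middle(v) if Middle(v) ∩ W ≠ ∅, and A*(v) = Top(v) otherwise. Then there exists a completion A of P such that W satisfies justified representation (JR) with respect to A if and only if W satisfies JR with respect to A*. -/
open Finset

variable {V C : Type*}

/-- `W` satisfies justified representation (JR) w.r.t. the approval profile `A`
for committee size `k`: every group `G` of at least `n/k` voters that commonly
approve some candidate has some approved candidate in `W`. -/
def SatisfiesJR [Fintype V] (k : ℕ) (A : V → Finset C) (W : Finset C) : Prop :=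
  ∀ G : Finset V, (Fintype.card V : ℚ) / k ≤ G.card →
    (∃ c : C, ∀ v ∈ G, c ∈ A v) →
    ∃ c ∈ W, ∃ v ∈ G, c ∈ A v

theorem stmt18 [Fintype V] [Fintype C] [DecidableEq C]
    (k : ℕ) (Top Mid Bot : V → Finset C) (pref : V → C → C → Prop)
    (hpart : ∀ v, Top v ∪ Mid v ∪ Bot v = Finset.univ)
    (hTM : ∀ v, Disjoint (Top v) (Mid v)) (hTB : ∀ v, Disjoint (Top v) (Bot v))
    (hMB : ∀ v, Disjoint (Mid v) (Bot v))
    (hdom : ∀ v c c', pref v c c' → c ∈ Mid v ∧ c' ∈ Mid v)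
    (htrans : ∀ v, Transitive (pref v))
    (hanti : ∀ v c c', pref v c c' → pref v c' c → c = c')
    (W : Finset C) (hW : W.card = k) :
    (∃ A : V → Finset C, IsCompletion Top Mid pref A ∧ SatisfiesJR k A W) ↔
    SatisfiesJR k (fun v => if (Mid v ∩ W).Nonempty then Top v ∪ Mid v else Top v) W := by
  constructor
  · rintro ⟨A, hcomp, hJR⟩ G hG ⟨c, hc⟩
    by_cases h : ∃ v ∈ G, (Mid v ∩ W).Nonempty
    · obtain ⟨v, hv, w, hw⟩ := h
      rw [mem_inter] at hw
      refine ⟨w, hw.2, v, hv, ?_⟩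
      show w ∈ if (Mid v ∩ W).Nonempty then Top v ∪ Mid v else Top v
      split_ifs with hif
      · exact mem_union_right _ hw.1
      · exact absurd ⟨w, mem_inter.mpr hw⟩ hif
    · push_neg at h
      have h' : ∀ v ∈ G, ¬ (Mid v ∩ W).Nonempty := by
        intro v hv; simpa using h v hv
      have hc' : ∀ v ∈ G, c ∈ A v := fun v hv => (hcomp v).1 (by
        have h2 : c ∈ if (Mid v ∩ W).Nonempty then Top v ∪ Mid v else Top v := hc v hv
        split_ifs at h2 with hif
        · exact absurd hif (h' v hv)
        · exact h2)
      obtain ⟨w, hwW, v, hv, hwA⟩ := hJR G hG ⟨c, hc'⟩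
      have hsub := (hcomp v).2.1 hwA
      rw [mem_union] at hsub
      rcases hsub with ht | hm
      · refine ⟨w, hwW, v, hv, ?_⟩
        show w ∈ if (Mid v ∩ W).Nonempty then Top v ∪ Mid v else Top v
        split_ifs with hif
        · exact absurd hif (h' v hv)
        · exact ht
      · exact absurd ⟨w, mem_inter.mpr ⟨hm, hwW⟩⟩ (h' v hv)
  · intro hJR
    refine ⟨fun v => if (Mid v ∩ W).Nonempty then Top v ∪ Mid v else Top v, ?_, hJR⟩
    intro v
    refine ⟨?_, ?_, ?_⟩
    · by_cases h : (Mid v ∩ W).Nonempty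
      · simp [if_pos h, subset_union_left]
      · simp [if_neg h]
    · by_cases h : (Mid v ∩ W).Nonempty
      · simp [if_pos h]
      · simp [if_neg h, subset_union_left]
    · intro c c' hp hc'
      by_cases h : (Mid v ∩ W).Nonempty
      · simp only [if_pos h, mem_union] at *
        exact Or.inr (hdom v c c' hp).1
      · simp only [if_neg h] at hc' ⊢
        exact absurd hc' (disjoint_right.mp (hTM v) (hdom v c c' hp).2)
end

section
/- Let P be a poset partial profile over C and let W ⊆ C with |W| = k. For each voter v let S_v = {c ∈ Middle(v) : there is no w ∈ W ∩ Middle(v) with w = c or w ≻_v c}, i.e., the largest subset of Middle(v) disjoint from W that is closed upward under ≻_v, and define the completion A° of P by A°(v) = Top(v) ∪ S_v. Then W satisfies justified representation (JR) with respect to every completion of P if and only if W satisfies JR with respect to A°. -/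
open Finset

variable {V C : Type*}

theorem stmt19 [Fintype V] [Fintype C] [DecidableEq C]
    (k : ℕ) (Top Mid Bot : V → Finset C) (pref : V → C → C → Prop)
    (hpart : ∀ v, Top v ∪ Mid v ∪ Bot v = Finset.univ)
    (hTM : ∀ v, Disjoint (Top v) (Mid v)) (hTB : ∀ v, Disjoint (Top v) (Bot v))
    (hMB : ∀ v, Disjoint (Mid v) (Bot v))
    (hdom : ∀ v c c', pref v c c' → c ∈ Mid v ∧ c' ∈ Mid v)
    (htrans : ∀ v, Transitive (pref v))
    (hanti : ∀ v c c', pref v c c' → pref v c' c → c = c')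
    (W : Finset C) (hW : W.card = k)
    -- `Sv v` is the largest subset of `Mid v` disjoint from `W` that is closed
    -- upward under `pref v`
    (Sv : V → Finset C)
    (hSv : ∀ v c, c ∈ Sv v ↔
      c ∈ Mid v ∧ ∀ x ∈ W ∩ Mid v, x ≠ c ∧ ¬ pref v x c) :
    (∀ A : V → Finset C, IsCompletion Top Mid pref A → SatisfiesJR k A W) ↔
    SatisfiesJR k (fun v => Top v ∪ Sv v) W := by
  have hcomp : IsCompletion Top Mid pref (fun v => Top v ∪ Sv v) := by
    intro v
    refine ⟨subset_union_left, ?_, ?_⟩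
    · apply union_subset_union_right
      intro c hc; exact ((hSv v c).1 hc).1
    · intro c c' hp hc'
      have hc'S : c' ∈ Sv v := by
        rcases mem_union.1 hc' with h | h
        · exact absurd ((hdom v c c' hp).2) (disjoint_left.1 (hTM v) h)
        · exact h
      have := (hSv v c').1 hc'S
      refine mem_union_right _ ((hSv v c).2 ⟨(hdom v c c' hp).1, ?_⟩)
      intro x hx
      constructor
      · rintro rfl
        exact (this.2 x hx).2 hp
      · intro hpx
        exact (this.2 x hx).2 (htrans v hpx hp)
  constructor
  · intro h; exact h _ hcomp
  · intro hJR A hA G hG ⟨c, hc⟩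
    by_contra hno
    push_neg at hno
    have hcA : ∀ v ∈ G, c ∈ Top v ∪ Sv v := by
      intro v hv
      have hcAv := hc v hv
      rcases mem_union.1 ((hA v).2.1 hcAv) with h | h
      · exact mem_union_left _ h
      · refine mem_union_right _ ((hSv v c).2 ⟨h, ?_⟩)
        intro x hx
        have hxW := (mem_inter.1 hx).1
        constructor
        · rintro rfl; exact hno x hxW v hv hcAv
        · intro hp
          exact hno x hxW v hv ((hA v).2.2 x c hp hcAv)
    obtain ⟨w, hwW, v, hv, hwA⟩ := hJR G hG ⟨c, hcA⟩
    rcases mem_union.1 hwA with h | h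
    · exact hno w hwW v hv ((hA v).1 h)
    · exact ((hSv v w).1 h).2 w (mem_inter.2 ⟨hwW, ((hSv v w).1 h).1⟩) |>.1 rfl
end
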